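/- arXiv:2004.07308 — 6 statements merged into one kernel-verified Lean document; each statement's English description precedes it below -/
import Mathlib

section
/- Every Scrope complex has reduced Euler characteristic equal to 0, 1, or −1. -/
/-!
A face of `Scr(k, z)` is a subset of `V = {1, …, k-1}` missing one of the intervals
`[x_i, y_i - 1]`, so up to the term `[V = ∅]`, `χ̃(Scr(k, z))` is the signed count `T(V, F)` of
the subsets of `V` meeting every interval of the family `F` of these intervals; the full simplex
is `Scr(k, z)` for `z = ((1, 1))`, whose only interval is empty.

Let `a = min V`. If no interval contains `a`, toggling `a` shows `T = 0`. Otherwise let `J` be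
the interval through `a` with the least right end: a subset of `V ∖ {a}` meeting `J` meets every
interval through `a`, whence `T(V, F) = -T(V ∖ J, F')`, where `F'` are the intervals avoiding
`a`. Induction on `|V|` gives `T ∈ {-1, 0, 1}`.
-/

namespace ScropePaper

/-- The generator `φ = [1, k-1] \ [x, y-1]`. -/
def scrPhi (k x y : ℕ) : Finset ℕ := Finset.Icc 1 (k - 1) \ Finset.Icc x (y - 1)

/-- The Scrope complex `Scr(k, z)` generated by the sets `φ_i`, as a set of faces. -/
def Scr (k : ℕ) (z : List (ℕ × ℕ)) : Finset (Finset ℕ) :=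
  (Finset.Icc 1 (k - 1)).powerset.filter fun σ => ∃ p ∈ z, σ ⊆ scrPhi k p.1 p.2

/-- A Scrope complex on `{1, …, k-1}` is either the full simplex or of the form `Scr(k, z)`
for a list `z` of pairs `(x, y)` with `1 ≤ x < y ≤ k`. -/
def IsScrope (k : ℕ) (S : Finset (Finset ℕ)) : Prop :=
  S = (Finset.Icc 1 (k - 1)).powerset ∨
    ∃ z : List (ℕ × ℕ), (∀ p ∈ z, 1 ≤ p.1 ∧ p.1 < p.2 ∧ p.2 ≤ k) ∧ S = Scr k z

/-- The reduced Euler characteristic `χ̃(Σ) = ∑_{σ ∈ Σ} (-1)^{|σ| - 1}`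
(the empty face contributes `-1`). -/
def reducedEuler (S : Finset (Finset ℕ)) : ℤ := ∑ σ ∈ S, (-1 : ℤ) ^ (σ.card + 1)

open Finset

section Transversal

variable {α : Type*} [DecidableEq α]

def transversalSum (V : Finset α) (F : Finset (Finset α)) : ℤ :=
  ∑ σ ∈ V.powerset with ∀ I ∈ F, ¬Disjoint σ I, (-1) ^ #σ

lemma transversalSum_empty (F : Finset (Finset α)) :
    transversalSum ∅ F = if F = ∅ then 1 else 0 := by
  simp only [transversalSum, powerset_empty, filter_singleton, eq_empty_iff_forall_notMem]
  split_ifs <;> simp_all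

lemma transversalSum_insert {a : α} {W : Finset α} (ha : a ∉ W) (F : Finset (Finset α)) :
    transversalSum (insert a W) F
      = transversalSum W F - transversalSum W {I ∈ F | a ∉ I} := by
  have hmeets (σ : Finset α) :
      (∀ I ∈ F, ¬Disjoint (insert a σ) I) ↔
        ∀ I ∈ {I ∈ F | a ∉ I}, ¬Disjoint σ I := by
    simp only [mem_filter, and_imp, disjoint_insert_left, not_and]
  have hcard (σ : Finset α) (hσ : σ ∈ W.powerset) :
      (-1 : ℤ) ^ #(insert a σ) = -(-1) ^ #σ := by
    rw [card_insert_of_notMem fun h => ha (mem_powerset.1 hσ h), pow_succ, mul_neg_one]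
  simp only [transversalSum, sum_filter, sum_powerset_insert ha, sub_eq_add_neg,
    ← sum_neg_distrib]
  congr 1
  refine sum_congr rfl fun σ hσ => ?_
  rw [if_congr (hmeets σ) (hcard σ hσ) rfl, apply_ite Neg.neg, neg_zero]

lemma transversalSum_insert_eq_zero {a : α} {W : Finset α} (ha : a ∉ W)
    {F : Finset (Finset α)} (hF : ∀ I ∈ F, a ∉ I) : transversalSum (insert a W) F = 0 := by
  rw [transversalSum_insert ha, filter_true_of_mem hF, sub_self]

lemma transversalSum_insert_family (W J : Finset α) (G : Finset (Finset α)) :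
    transversalSum W (insert J G) = transversalSum W G - transversalSum (W \ J) G := by
  have hsplit := sum_filter_add_sum_filter_not {σ ∈ W.powerset | ∀ I ∈ G, ¬Disjoint σ I}
    (fun σ => ¬Disjoint σ J) fun σ => (-1 : ℤ) ^ #σ
  rw [filter_filter, filter_filter] at hsplit
  rw [transversalSum, transversalSum, transversalSum, eq_sub_iff_add_eq, ← hsplit]
  congr 2 <;> ext σ
  · simp only [mem_filter, forall_mem_insert]
    tauto
  · simp only [mem_filter, mem_powerset, subset_sdiff, not_not]
    tauto

lemma transversalSum_insert_of_minimal {a : α} {W J : Finset α} (ha : a ∉ W)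
    {F : Finset (Finset α)} (hJ : J ∈ F) (hmin : ∀ I ∈ F, a ∈ I → J ∩ W ⊆ I) :
    transversalSum (insert a W) F = -transversalSum (W \ J) {I ∈ F | a ∉ I} := by
  have hfamily : transversalSum W F = transversalSum W (insert J {I ∈ F | a ∉ I}) := by
    refine sum_congr (filter_congr fun σ hσ => ?_) fun _ _ => rfl
    simp only [forall_mem_insert, mem_filter, and_imp]
    refine ⟨fun h => ⟨h J hJ, fun I hI _ => h I hI⟩, fun ⟨hσJ, h⟩ I hI => ?_⟩
    by_cases haI : a ∈ I
    · obtain ⟨b, hbσ, hbJ⟩ := not_disjoint_iff.1 hσJ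
      exact not_disjoint_iff.2
        ⟨b, hbσ, hmin I hI haI (mem_inter.2 ⟨hbJ, mem_powerset.1 hσ hbσ⟩)⟩
    · exact h I hI haI
  rw [transversalSum_insert ha, hfamily, transversalSum_insert_family]
  ring

end Transversal

section Intervals

variable {α : Type*} [LinearOrder α] [LocallyFiniteOrder α]

lemma exists_interval_inter_subset {a : α} {W : Finset α} (hW : ∀ b ∈ W, a ≤ b)
    {F : Finset (Finset α)} (hF : ∀ I ∈ F, ∃ x y, I = Icc x y) (ha : ∃ I ∈ F, a ∈ I) :
    ∃ J ∈ F, ∀ I ∈ F, a ∈ I → J ∩ W ⊆ I := by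
  obtain ⟨J, hJ, hJmin⟩ :=
    exists_min_image {I ∈ F | a ∈ I} Finset.max (filter_nonempty_iff.2 ha)
  rw [mem_filter] at hJ
  refine ⟨J, hJ.1, fun I hI haI b hb => ?_⟩
  obtain ⟨x, y, rfl⟩ := hF I hI
  rw [mem_inter] at hb
  have hby : (b : WithBot α) ≤ y := calc
    (b : WithBot α) ≤ J.max := le_max hb.1
    _ ≤ (Icc x y).max := hJmin _ (mem_filter.2 ⟨hI, haI⟩)
    _ ≤ y := Finset.max_le fun c hc => WithBot.coe_le_coe.2 (mem_Icc.1 hc).2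
  exact mem_Icc.2 ⟨(mem_Icc.1 haI).1.trans (hW b hb.2), WithBot.coe_le_coe.1 hby⟩

theorem abs_transversalSum_le_one (V : Finset α) {F : Finset (Finset α)}
    (hF : ∀ I ∈ F, ∃ x y, I = Icc x y) : |transversalSum V F| ≤ 1 := by
  induction V using Finset.strongInduction generalizing F with
  | H V ih =>
  rcases V.eq_empty_or_nonempty with rfl | hV
  · rw [transversalSum_empty]
    split_ifs <;> simp
  have haV := V.min'_mem hV
  rw [← insert_erase haV]
  by_cases hcov : ∃ I ∈ F, V.min' hV ∈ I
  · obtain ⟨J, hJ, hmin⟩ := exists_interval_inter_subset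
      (fun b hb => V.min'_le b (mem_of_mem_erase hb)) hF hcov
    rw [transversalSum_insert_of_minimal (notMem_erase _ V) hJ hmin, abs_neg]
    exact ih _ (sdiff_subset.trans_ssubset (erase_ssubset haV))
      fun I hI => hF I (mem_filter.1 hI).1
  · push Not at hcov
    rw [transversalSum_insert_eq_zero (notMem_erase _ V) hcov, abs_zero]
    exact zero_le_one

end Intervals

lemma reducedEuler_filter_not_transversal (V : Finset ℕ) (F : Finset (Finset ℕ)) :
    reducedEuler {σ ∈ V.powerset | ¬∀ I ∈ F, ¬Disjoint σ I}
      = transversalSum V F - if V = ∅ then 1 else 0 := by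
  have hsplit := sum_filter_add_sum_filter_not V.powerset (fun σ => ∀ I ∈ F, ¬Disjoint σ I)
    fun σ => (-1 : ℤ) ^ #σ
  rw [sum_powerset_neg_one_pow_card] at hsplit
  simp only [reducedEuler, pow_succ, mul_neg_one, sum_neg_distrib, transversalSum]
  linarith

lemma Scr_eq_filter_not_transversal (k : ℕ) (z : List (ℕ × ℕ)) :
    Scr k z = {σ ∈ (Icc 1 (k - 1)).powerset |
      ¬∀ I ∈ (z.map fun p : ℕ × ℕ => Icc p.1 (p.2 - 1)).toFinset, ¬Disjoint σ I} := by
  ext σ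
  simp only [Scr, scrPhi, subset_sdiff, mem_filter, mem_powerset, List.mem_toFinset,
    List.mem_map, forall_exists_index, and_imp, forall_apply_eq_imp_iff₂, not_forall, not_not,
    exists_prop]
  exact and_congr_right fun hσ => by simp only [hσ, true_and]

lemma Scr_singleton_self (k x : ℕ) : Scr k [(x, x)] = (Icc 1 (k - 1)).powerset := by
  ext σ
  simp only [Scr, scrPhi, subset_sdiff, mem_filter, mem_powerset, List.mem_singleton,
    exists_eq_left, and_self_left, and_iff_left_iff_imp]
  intro hσ
  refine disjoint_left.2 fun b hbσ hb => ?_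
  have := mem_Icc.1 (hσ hbσ)
  have := mem_Icc.1 hb
  omega

theorem reducedEuler_of_isScrope_general (k : ℕ) (S : Finset (Finset ℕ))
    (hS : IsScrope k S) :
    reducedEuler S = 0 ∨ reducedEuler S = 1 ∨ reducedEuler S = -1 := by
  obtain ⟨z, rfl⟩ : ∃ z, S = Scr k z := by
    rcases hS with rfl | ⟨z, -, rfl⟩
    exacts [⟨[(1, 1)], (Scr_singleton_self k 1).symm⟩, ⟨z, rfl⟩]
  rw [Scr_eq_filter_not_transversal, reducedEuler_filter_not_transversal]
  have hT := abs_le.1 <| abs_transversalSum_le_one (Icc 1 (k - 1))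
    (F := (z.map fun p : ℕ × ℕ => Icc p.1 (p.2 - 1)).toFinset) <| by
      simp only [List.mem_toFinset, List.mem_map]
      rintro _ ⟨p, -, rfl⟩
      exact ⟨_, _, rfl⟩
  split_ifs with hV
  · rw [hV, transversalSum_empty]
    split_ifs <;> simp
  · omega

/-- Every Scrope complex has reduced Euler characteristic `0`, `1` or `-1`. -/
theorem reducedEuler_of_isScrope (k : ℕ) (hk : 1 ≤ k) (S : Finset (Finset ℕ))
    (hS : IsScrope k S) :
    reducedEuler S = 0 ∨ reducedEuler S = 1 ∨ reducedEuler S = -1 :=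
  reducedEuler_of_isScrope_general k S hS

end ScropePaper
end

section
/- Every Scrope complex containing at least one nonempty face has geometric realization that is either contractible or homotopy equivalent to a sphere S^d for some d ≥ 0. -/
namespace ScropePaper

/-- The `j`-th standard basis vector of `ℝ^m` (vertices are labelled `1, …, m`). -/
noncomputable def basisVec (m j : ℕ) : EuclideanSpace ℝ (Fin m) :=
  WithLp.toLp 2 (fun i : Fin m => if (i : ℕ) + 1 = j then 1 else 0)

/-- The geometric realization of a simplicial complex on `{1, …, m}`: the union over the
faces `σ` of the convex hulls of the corresponding standard basis vectors in `ℝ^m`. -/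
noncomputable def geomReal (m : ℕ) (S : Finset (Finset ℕ)) : Set (EuclideanSpace ℝ (Fin m)) :=
  ⋃ σ ∈ S, convexHull ℝ {x | ∃ j ∈ σ, x = basisVec m j}

/-!
Every Scrope complex is a complex `avoidingComplex V Z` of the subsets of a vertex set `V ⊆ ℕ`
that miss one of the intervals `[a, b]`, `(a, b) ∈ Z`, and this class is closed under deleting a
vertex or an interval. We induct on `#V + #Z`.

* If some vertex is a cone point, the realization is star-convex, hence contractible.
* If every interval containing `w` also contains `v ≠ w`, the vertex map `v ↦ w` retracts the
  complex onto the one on `V \ {v}`, and the straight-line homotopy shows this retraction is a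
  homotopy equivalence.
* If the trace on `V` of one interval is contained in that of another, the larger one is
  redundant.

Otherwise the traces form an antichain of intervals of `V` and no vertex dominates another. Then
`p ↦ min (trace p)` and `p ↦ max (trace p)` are injections `Z → V`, and the leftmost interval
through a vertex gives an injection `V → Z`; so both are bijections, `∑ min = ∑ max`, and every
trace is a single vertex. The complex is then the boundary of the simplex on `V`, whose
realization is radially homeomorphic to a sphere.
-/

open Set Topology Function
open scoped ContinuousMap

lemma mem_geomReal {m : ℕ} {S : Finset (Finset ℕ)} {x : EuclideanSpace ℝ (Fin m)} :
    x ∈ geomReal m S ↔ ∃ σ ∈ S, x ∈ convexHull ℝ (basisVec m '' σ) := by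
  simp only [geomReal, mem_iUnion₂, exists_prop, Set.image, eq_comm (a := basisVec m _)]
  rfl

lemma convexHull_subset_geomReal {m : ℕ} {S : Finset (Finset ℕ)} {σ : Finset ℕ} (hσ : σ ∈ S) :
    convexHull ℝ (basisVec m '' σ) ⊆ geomReal m S := fun _ hx =>
  mem_geomReal.2 ⟨σ, hσ, hx⟩

lemma geomReal_mono {m : ℕ} {S S' : Finset (Finset ℕ)} (h : S ⊆ S') :
    geomReal m S ⊆ geomReal m S' := fun _ hx => by
  obtain ⟨σ, hσ, hx⟩ := mem_geomReal.1 hx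
  exact convexHull_subset_geomReal (h hσ) hx

lemma basisVec_eq_single {m j : ℕ} (hj : j ∈ Finset.Icc 1 m) :
    basisVec m j = EuclideanSpace.single (⟨j - 1, by grind⟩ : Fin m) 1 := by
  ext i
  simp only [basisVec, PiLp.single_apply, Fin.ext_iff]
  grind

lemma linearIndependent_basisVec {ι : Type*} {m : ℕ} {e : ι → ℕ} (he : Injective e)
    (hem : ∀ i, e i ∈ Finset.Icc 1 m) : LinearIndependent ℝ fun i => basisVec m (e i) := by
  have : (fun i => basisVec m (e i)) =
      (fun k : Fin m => EuclideanSpace.single k (1 : ℝ)) ∘ fun i => ⟨e i - 1, by grind⟩ :=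
    funext fun i => basisVec_eq_single (hem i)
  rw [this]
  refine EuclideanSpace.orthonormal_single.linearIndependent.comp _ fun i j hij => he ?_
  have := hem i
  have := hem j
  grind

theorem nonempty_homotopyEquiv_of_segment_subset {E : Type*} [AddCommGroup E] [Module ℝ E]
    [TopologicalSpace E] [IsTopologicalAddGroup E] [ContinuousSMul ℝ E] {X Y : Set E}
    (f : E → E) (hf : Continuous f) (hYX : Y ⊆ X) (hfXY : MapsTo f X Y)
    (hfY : ∀ y ∈ Y, f y = y) (hseg : ∀ x ∈ X, segment ℝ (f x) x ⊆ X) :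
    Nonempty (X ≃ₕ Y) := by
  let r : C(X, Y) := ⟨hfXY.restrict f X Y, (hf.comp continuous_subtype_val).subtype_mk _⟩
  let ι : C(Y, X) := ⟨inclusion hYX, continuous_inclusion hYX⟩
  have hrι : r.comp ι = ContinuousMap.id Y := by
    ext y
    exact hfY y y.2
  refine ⟨⟨r, ι, ⟨?_⟩, by rw [hrι]⟩⟩
  exact
    { toFun := fun p => ⟨AffineMap.lineMap (f p.2) p.2 (p.1 : ℝ),
        hseg _ p.2.2 (lineMap_mem_segment ℝ _ _ p.1.2)⟩
      continuous_toFun := by fun_prop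
      map_zero_left := fun x => by ext; simp [r, ι, MapsTo.restrict, Subtype.map]
      map_one_left := fun x => by simp }

/-- `e_j ↦ e_{c j}` for `j ∈ {1, …, m}`; the basis vector with index `i : Fin m` is `e_{i + 1}`. -/
noncomputable def vertexMapLinear (m : ℕ) (c : ℕ → ℕ) :
    EuclideanSpace ℝ (Fin m) →ₗ[ℝ] EuclideanSpace ℝ (Fin m) :=
  (EuclideanSpace.basisFun (Fin m) ℝ).toBasis.constr ℝ fun i => basisVec m (c (i + 1))

lemma vertexMapLinear_basisVec {m : ℕ} (c : ℕ → ℕ) {j : ℕ} (hj : j ∈ Finset.Icc 1 m) :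
    vertexMapLinear m c (basisVec m j) = basisVec m (c j) := by
  rw [basisVec_eq_single hj, ← EuclideanSpace.basisFun_apply, ← OrthonormalBasis.coe_toBasis,
    vertexMapLinear, Module.Basis.constr_basis]
  grind

lemma vertexMapLinear_image_convexHull {m : ℕ} (c : ℕ → ℕ) {σ : Finset ℕ}
    (hσ : σ ⊆ Finset.Icc 1 m) :
    vertexMapLinear m c '' convexHull ℝ (basisVec m '' σ) =
      convexHull ℝ (basisVec m '' (σ.image c)) := by
  rw [LinearMap.image_convexHull, image_image, Finset.coe_image, image_image]
  congr 1
  exact image_congr fun j hj => vertexMapLinear_basisVec c (hσ hj)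

theorem nonempty_homotopyEquiv_geomReal_of_vertexMap {m : ℕ} {S S' : Finset (Finset ℕ)}
    (c : ℕ → ℕ) (hSm : ∀ σ ∈ S, σ ⊆ Finset.Icc 1 m) (hS'S : S' ⊆ S)
    (himage : ∀ σ ∈ S, σ.image c ∈ S') (hunion : ∀ σ ∈ S, σ ∪ σ.image c ∈ S)
    (hfix : ∀ σ ∈ S', ∀ j ∈ σ, c j = j) :
    Nonempty (geomReal m S ≃ₕ geomReal m S') := by
  set F := vertexMapLinear m c
  have hF : ∀ σ ∈ S, MapsTo F (convexHull ℝ (basisVec m '' σ))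
      (convexHull ℝ (basisVec m '' (σ.image c))) := fun σ hσ =>
    mapsTo_iff_image_subset.2 (vertexMapLinear_image_convexHull c (hSm σ hσ)).subset
  refine nonempty_homotopyEquiv_of_segment_subset F
    (LinearMap.continuous_of_finiteDimensional F) (geomReal_mono hS'S) ?_ ?_ ?_
  · intro x hx
    obtain ⟨σ, hσ, hx⟩ := mem_geomReal.1 hx
    exact convexHull_subset_geomReal (himage σ hσ) (hF σ hσ hx)
  · intro y hy
    obtain ⟨σ, hσ, hy⟩ := mem_geomReal.1 hy
    refine convexHull_min ?_ (LinearMap.eqLocus F LinearMap.id).convex hy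
    rintro _ ⟨j, hj, rfl⟩
    change F _ = _
    rw [vertexMapLinear_basisVec c (hSm σ (hS'S hσ) hj), hfix σ hσ j hj]
    rfl
  · intro x hx
    obtain ⟨σ, hσ, hx⟩ := mem_geomReal.1 hx
    refine (convexHull_subset_geomReal (hunion σ hσ)).trans'
      ((convex_convexHull ℝ _).segment_subset ?_ ?_)
    · exact convexHull_mono (image_mono (by simp)) (hF σ hσ hx)
    · exact convexHull_mono (image_mono (by simp)) hx

theorem contractibleSpace_geomReal_of_cone {m : ℕ} {S : Finset (Finset ℕ)} {v : ℕ}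
    (hS : S.Nonempty) (hcone : ∀ σ ∈ S, insert v σ ∈ S) :
    ContractibleSpace (geomReal m S) := by
  have hv : ∀ σ : Finset ℕ, basisVec m v ∈ convexHull ℝ (basisVec m '' ↑(insert v σ)) :=
    fun σ => subset_convexHull ℝ _ (mem_image_of_mem _ (by simp))
  refine StarConvex.contractibleSpace (x := basisVec m v) ?_ ?_
  · refine starConvex_iff_segment_subset.2 fun y hy => ?_
    obtain ⟨σ, hσ, hy⟩ := mem_geomReal.1 hy
    refine (convexHull_subset_geomReal (hcone σ hσ)).trans'
      ((convex_convexHull ℝ _).segment_subset (hv σ) ?_)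
    exact convexHull_mono (image_mono (by simp)) hy
  · obtain ⟨σ, hσ⟩ := hS
    exact ⟨_, convexHull_subset_geomReal (hcone σ hσ) (hv σ)⟩

theorem nonempty_homeomorph_sphere_of_posHomogeneous {E : Type*} [NormedAddCommGroup E]
    [NormedSpace ℝ E] (N : E → ℝ) (hN : Continuous N) (hpos : ∀ x ≠ 0, 0 < N x)
    (hsmul : ∀ (a : ℝ) (x : E), 0 < a → N (a • x) = a * N x) :
    Nonempty ({x | N x = 1} ≃ₜ Metric.sphere (0 : E) 1) := by
  have hN0 : N 0 ≠ 1 := fun h => by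
    have := hsmul 2 0 two_pos
    rw [smul_zero, h] at this
    norm_num at this
  have hne : ∀ x : {x | N x = 1}, ‖(x : E)‖ ≠ 0 := fun x =>
    norm_ne_zero_iff.2 fun h => hN0 (h ▸ x.2)
  have hNpos : ∀ u : Metric.sphere (0 : E) 1, 0 < N u := fun u =>
    hpos u (ne_zero_of_mem_unit_sphere u)
  exact ⟨{
    toFun := fun x => ⟨‖(x : E)‖⁻¹ • (x : E), by simp [norm_smul, hne x]⟩
    invFun := fun u => ⟨(N u)⁻¹ • (u : E), by
      simp [hsmul _ _ (inv_pos.2 (hNpos u)), (hNpos u).ne']⟩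
    left_inv := fun x => by
      ext
      simp [hsmul _ _ (inv_pos.2 ((norm_nonneg _).lt_of_ne' (hne x))), x.2.out, smul_smul,
        hne x]
    right_inv := fun u => by
      ext
      simp [norm_smul, abs_of_pos (hNpos u), smul_smul, (hNpos u).ne']
    continuous_toFun := by
      refine Continuous.subtype_mk ?_ _
      exact ((continuous_subtype_val.norm).inv₀ hne).smul continuous_subtype_val
    continuous_invFun := by
      refine Continuous.subtype_mk ?_ _
      exact ((hN.comp continuous_subtype_val).inv₀ fun u => (hNpos u).ne').smul
        continuous_subtype_val }⟩

def stdSimplexBoundary (n : ℕ) : Set (Fin n → ℝ) :=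
  {w | w ∈ stdSimplex ℝ (Fin n) ∧ ∃ i, w i = 0}

section SimplexGauge

variable (d : ℕ)

/-- Barycentric coordinates on the hyperplane `∑ w = 1` are charted by
`w i = (1 - simplexForms d t i) / (d + 2)`, i.e. `w 0 = (1 - ∑ t) / (d + 2)` and
`w (i + 1) = (1 + t i) / (d + 2)`, with `t = 0` at the barycentre. So the standard simplex is
`simplexGauge d ≤ 1`, and its boundary is `simplexGauge d = 1`. -/
def simplexForms (t : EuclideanSpace ℝ (Fin (d + 1))) : Fin (d + 2) → ℝ :=
  Fin.cons (∑ i, t i) fun i => -t i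

noncomputable def simplexGauge (t : EuclideanSpace ℝ (Fin (d + 1))) : ℝ :=
  Finset.univ.sup' Finset.univ_nonempty (simplexForms d t)

variable {d}

lemma sum_simplexForms (t : EuclideanSpace ℝ (Fin (d + 1))) : ∑ i, simplexForms d t i = 0 := by
  simp [simplexForms, Fin.sum_univ_succ]

lemma continuous_simplexForms_apply (i : Fin (d + 2)) :
    Continuous fun t => simplexForms d t i := by
  induction i using Fin.cases <;> simp only [simplexForms, Fin.cons_zero, Fin.cons_succ] <;>
    fun_prop

lemma simplexForms_le_simplexGauge (t : EuclideanSpace ℝ (Fin (d + 1))) (i : Fin (d + 2)) :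
    simplexForms d t i ≤ simplexGauge d t :=
  Finset.le_sup' _ (Finset.mem_univ i)

lemma simplexGauge_eq_one_iff (t : EuclideanSpace ℝ (Fin (d + 1))) :
    simplexGauge d t = 1 ↔ (∀ i, simplexForms d t i ≤ 1) ∧ ∃ i, simplexForms d t i = 1 := by
  refine ⟨fun h => ⟨fun i => h ▸ simplexForms_le_simplexGauge t i, ?_⟩, fun ⟨hle, i, hi⟩ => ?_⟩
  · obtain ⟨i, -, hi⟩ := Finset.exists_mem_eq_sup' Finset.univ_nonempty (simplexForms d t)
    exact ⟨i, hi ▸ h⟩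
  · exact le_antisymm (Finset.sup'_le _ _ fun i _ => hle i) (hi ▸ simplexForms_le_simplexGauge t i)

lemma continuous_simplexGauge : Continuous (simplexGauge d) :=
  Continuous.finset_sup'_apply _ fun i _ => continuous_simplexForms_apply i

lemma simplexGauge_smul {a : ℝ} (ha : 0 < a) (t : EuclideanSpace ℝ (Fin (d + 1))) :
    simplexGauge d (a • t) = a * simplexGauge d t := by
  have : simplexForms d (a • t) = fun i => a * simplexForms d t i := by
    ext i
    induction i using Fin.cases <;> simp [simplexForms, Finset.mul_sum]
  rw [simplexGauge, this, simplexGauge,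
    Finset.apply_sup'_eq_sup'_comp _ _ fun x y => mul_max_of_nonneg x y ha.le]
  rfl

lemma simplexGauge_pos {t : EuclideanSpace ℝ (Fin (d + 1))} (ht : t ≠ 0) :
    0 < simplexGauge d t := by
  by_contra! h
  have hforms : ∀ i ∈ Finset.univ, simplexForms d t i = 0 :=
    (Finset.sum_eq_zero_iff_of_nonpos fun i _ => (simplexForms_le_simplexGauge t i).trans h).1
      (sum_simplexForms t)
  exact ht (by ext i; simpa [simplexForms] using hforms i.succ)

lemma simplexForms_toLp {w : Fin (d + 2) → ℝ} (hw : ∑ i, w i = 1) :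
    simplexForms d (WithLp.toLp 2 fun i => (d + 2) * w i.succ - 1) =
      fun i => 1 - (d + 2) * w i := by
  ext i
  induction i using Fin.cases with
  | zero =>
    rw [Fin.sum_univ_succ] at hw
    simp [simplexForms, Finset.sum_sub_distrib, ← Finset.mul_sum]
    linear_combination (d + 2 : ℝ) * hw
  | succ i => simp [simplexForms]

theorem nonempty_homeomorph_simplexGauge_eq_one :
    Nonempty ({t | simplexGauge d t = 1} ≃ₜ stdSimplexBoundary (d + 2)) := by
  have hd : (0 : ℝ) < d + 2 := by positivity
  refine ⟨{
    toFun := fun t => ⟨fun i => (1 - simplexForms d t i) / (d + 2), ?_⟩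
    invFun := fun w => ⟨WithLp.toLp 2 fun i => (d + 2) * w.1 i.succ - 1, ?_⟩
    left_inv := fun t => ?_
    right_inv := fun w => ?_
    continuous_toFun := ?_
    continuous_invFun := ?_ }⟩
  · obtain ⟨hle, i, hi⟩ := (simplexGauge_eq_one_iff t.1).1 t.2
    refine ⟨⟨fun j => div_nonneg (sub_nonneg.2 (hle j)) hd.le, ?_⟩, i, by simp [hi]⟩
    rw [← Finset.sum_div, Finset.sum_sub_distrib, sum_simplexForms]
    simp [hd.ne']
  · obtain ⟨⟨hnn, hsum⟩, i, hi⟩ : w.1 ∈ stdSimplex ℝ (Fin (d + 2)) ∧ ∃ i, w.1 i = 0 := w.2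
    rw [Set.mem_ofPred_eq, simplexGauge_eq_one_iff, simplexForms_toLp hsum]
    exact ⟨fun j => sub_le_self _ (mul_nonneg hd.le (hnn j)), i, by simp [hi]⟩
  · ext i
    simp [simplexForms, mul_div_cancel₀ _ hd.ne']
  · ext i
    simp [simplexForms_toLp w.2.1.2, hd.ne']
  · refine Continuous.subtype_mk (continuous_pi fun i => ?_) _
    exact (continuous_const.sub
      ((continuous_simplexForms_apply i).comp continuous_subtype_val)).div_const _
  · refine ((PiLp.continuous_toLp 2 _).comp (continuous_pi fun i => ?_)).subtype_mk _
    exact (continuous_const.mul ((continuous_apply _).comp continuous_subtype_val)).sub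
      continuous_const

end SimplexGauge

theorem geomReal_ssubsets_eq_image {m n : ℕ} {V : Finset ℕ} (e : Fin n ≃ V) :
    geomReal m V.ssubsets =
      Fintype.linearCombination ℝ (fun i => basisVec m (e i)) '' stdSimplexBoundary n := by
  set L := Fintype.linearCombination ℝ fun i => basisVec m (e i)
  have he : Injective fun i => (e i : ℕ) := Subtype.val_injective.comp e.injective
  have he_surj : ∀ v ∈ V, ∃ i, (e i : ℕ) = v := fun v hv => ⟨e.symm ⟨v, hv⟩, by simp⟩
  apply Subset.antisymm
  · intro x hx
    obtain ⟨σ, hσV, hx⟩ := mem_geomReal.1 hx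
    obtain ⟨_, hv, hvσ⟩ := Finset.exists_of_ssubset (Finset.mem_ssubsets.1 hσV)
    obtain ⟨i₀, rfl⟩ := he_surj _ hv
    set facet := {w | w ∈ stdSimplex ℝ (Fin n) ∧ w i₀ = 0}
    have hfacet : Convex ℝ (L '' facet) :=
      ((convex_stdSimplex ℝ _).inter
        (convex_hyperplane (LinearMap.proj i₀).isLinear 0)).linear_image L
    have hfacet_sub : facet ⊆ stdSimplexBoundary n := fun w hw => ⟨hw.1, i₀, hw.2⟩
    refine image_mono hfacet_sub (convexHull_min ?_ hfacet hx)
    rintro _ ⟨j, hj, rfl⟩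
    obtain ⟨i, rfl⟩ := he_surj j ((Finset.mem_ssubsets.1 hσV).subset hj)
    refine ⟨Pi.single i 1, ⟨single_mem_stdSimplex ℝ i, ?_⟩, by simp [L]⟩
    exact Pi.single_eq_of_ne (by rintro rfl; exact hvσ hj) _
  · rintro _ ⟨w, ⟨⟨hnn, hsum⟩, i₀, hi₀⟩, rfl⟩
    refine convexHull_subset_geomReal (σ := V.erase (e i₀))
      (Finset.mem_ssubsets.2 (Finset.erase_ssubset (e i₀).2)) ?_
    have hLw : L w = ∑ i ∈ Finset.univ.erase i₀, w i • basisVec m (e i) := by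
      rw [Fintype.linearCombination_apply, ← Finset.sum_erase _ (by rw [hi₀, zero_smul])]
    rw [hLw]
    refine (convex_convexHull ℝ _).sum_mem (fun i _ => hnn i)
      (by rwa [Finset.sum_erase _ hi₀]) fun i hi => subset_convexHull ℝ _ ?_
    exact mem_image_of_mem _ (Finset.mem_erase.2 ⟨he.ne (Finset.ne_of_mem_erase hi), (e i).2⟩)

theorem nonempty_homeomorph_geomReal_ssubsets {m : ℕ} {V : Finset ℕ}
    (hV : V ⊆ Finset.Icc 1 m) :
    Nonempty (geomReal m V.ssubsets ≃ₜ stdSimplexBoundary V.card) := by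
  set e := V.equivFin.symm
  set L := Fintype.linearCombination ℝ fun i => basisVec m (e i)
  have hL : Injective L := (linearIndependent_basisVec (Subtype.val_injective.comp e.injective)
    fun i => hV (e i).2).fintypeLinearCombination_injective
  have hemb := (L.isClosedEmbedding_of_injective (LinearMap.ker_eq_bot.2 hL)).isEmbedding
  exact ⟨((hemb.homeomorphImage _).trans
    (Homeomorph.setCongr (geomReal_ssubsets_eq_image e).symm)).symm⟩

theorem nonempty_homeomorph_sphere_geomReal_ssubsets {m d : ℕ} {V : Finset ℕ}
    (hV : V ⊆ Finset.Icc 1 m) (hcard : V.card = d + 2) :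
    Nonempty (geomReal m V.ssubsets ≃ₜ Metric.sphere (0 : EuclideanSpace ℝ (Fin (d + 1))) 1) := by
  obtain ⟨e₁⟩ := nonempty_homeomorph_geomReal_ssubsets hV
  obtain ⟨e₂⟩ := nonempty_homeomorph_simplexGauge_eq_one (d := d)
  obtain ⟨e₃⟩ := nonempty_homeomorph_sphere_of_posHomogeneous (simplexGauge d)
    continuous_simplexGauge (fun _ => simplexGauge_pos) fun _ t ha => simplexGauge_smul ha t
  rw [hcard] at e₁
  exact ⟨e₁.trans (e₂.symm.trans e₃)⟩

def trace (V : Finset ℕ) (p : ℕ × ℕ) : Finset ℕ := V ∩ Finset.Icc p.1 p.2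

-- Both are `0` for an empty trace.
noncomputable def traceMin (V : Finset ℕ) (p : ℕ × ℕ) : ℕ := sInf (trace V p : Set ℕ)

noncomputable def traceMax (V : Finset ℕ) (p : ℕ × ℕ) : ℕ := sSup (trace V p : Set ℕ)

section Trace

variable {V : Finset ℕ} {Z : Finset (ℕ × ℕ)} {p q : ℕ × ℕ} {u : ℕ}

lemma mem_trace : u ∈ trace V p ↔ u ∈ V ∧ p.1 ≤ u ∧ u ≤ p.2 := by
  simp [trace]

lemma traceMin_le (hu : u ∈ trace V p) : traceMin V p ≤ u :=
  csInf_le (Finset.bddBelow _) hu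

lemma le_traceMax (hu : u ∈ trace V p) : u ≤ traceMax V p :=
  le_csSup (Finset.bddAbove _) hu

lemma mem_trace_of_le_of_le (hp : (trace V p).Nonempty) (hu : u ∈ V) (hlo : traceMin V p ≤ u)
    (hhi : u ≤ traceMax V p) : u ∈ trace V p := by
  have hmin := mem_trace.1 hp.csInf_mem
  have hmax := mem_trace.1 hp.csSup_mem
  exact mem_trace.2 ⟨hu, hmin.2.1.trans hlo, hhi.trans hmax.2.2⟩

lemma trace_subset_of_le (hq : (trace V q).Nonempty) (hlo : traceMin V q ≤ traceMin V p)
    (hhi : traceMax V p ≤ traceMax V q) : trace V p ⊆ trace V q := fun _ hu =>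
  mem_trace_of_le_of_le hq (mem_trace.1 hu).1 (hlo.trans (traceMin_le hu))
    ((le_traceMax hu).trans hhi)

lemma injOn_traceMin (hne : ∀ p ∈ Z, (trace V p).Nonempty)
    (hanti : ∀ p ∈ Z, ∀ q ∈ Z, trace V p ⊆ trace V q → p = q) :
    InjOn (traceMin V) Z := fun p hp q hq h => by
  rcases le_total (traceMax V p) (traceMax V q) with hle | hle
  · exact hanti p hp q hq (trace_subset_of_le (hne q hq) h.ge hle)
  · exact (hanti q hq p hp (trace_subset_of_le (hne p hp) h.le hle)).symm

lemma injOn_traceMax (hne : ∀ p ∈ Z, (trace V p).Nonempty)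
    (hanti : ∀ p ∈ Z, ∀ q ∈ Z, trace V p ⊆ trace V q → p = q) :
    InjOn (traceMax V) Z := fun p hp q hq h => by
  rcases le_total (traceMin V p) (traceMin V q) with hle | hle
  · exact (hanti q hq p hp (trace_subset_of_le (hne p hp) hle h.ge)).symm
  · exact hanti p hp q hq (trace_subset_of_le (hne q hq) hle h.le)

lemma card_le_card_of_not_dominated (hcover : ∀ v ∈ V, ∃ p ∈ Z, v ∈ trace V p)
    (hanti : ∀ p ∈ Z, ∀ q ∈ Z, trace V p ⊆ trace V q → p = q)
    (hdom : ∀ v ∈ V, ∀ w ∈ V, (∀ p ∈ Z, w ∈ trace V p → v ∈ trace V p) → v = w) :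
    V.card ≤ Z.card := by
  have hleft : ∀ v ∈ V, ∃ p ∈ Z, v ∈ trace V p ∧
      ∀ s ∈ Z, v ∈ trace V s → traceMin V p ≤ traceMin V s := fun v hv => by
    obtain ⟨p, hp, hmin⟩ := Finset.exists_min_image (Z.filter (v ∈ trace V ·)) (traceMin V)
      (by obtain ⟨p, hp, hvp⟩ := hcover v hv; exact ⟨p, Finset.mem_filter.2 ⟨hp, hvp⟩⟩)
    rw [Finset.mem_filter] at hp
    exact ⟨p, hp.1, hp.2, fun s hs hvs => hmin s (Finset.mem_filter.2 ⟨hs, hvs⟩)⟩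
  choose! g hgZ hgv hgmin using hleft
  -- if `v < w` share their leftmost interval, every interval through `v` also contains `w`
  have key : ∀ v ∈ V, ∀ w ∈ V, v < w → g v = g w → False := by
    intro v hv w hw hvw hg
    refine hvw.ne (hdom w hw v hv fun s hs hvs => ?_).symm
    by_contra hws
    have hwp : w ∈ trace V (g v) := hg ▸ hgv w hw
    have hhi : traceMax V s ≤ traceMax V (g v) := by
      refine le_trans ?_ (le_traceMax hwp)
      by_contra! hlt
      exact hws (mem_trace_of_le_of_le ⟨v, hvs⟩ hw ((traceMin_le hvs).trans hvw.le) hlt.le)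
    have hsub := trace_subset_of_le ⟨w, hwp⟩ (hgmin v hv s hs hvs) hhi
    exact hws (hanti s hs (g v) (hgZ v hv) hsub ▸ hwp)
  refine Finset.card_le_card_of_injOn g (fun v hv => hgZ v hv) fun v hv w hw hg => ?_
  rcases lt_trichotomy v w with hlt | heq | hlt
  · exact (key v hv w hw hlt hg).elim
  · exact heq
  · exact (key w hw v hv hlt hg.symm).elim

theorem trace_eq_singleton_of_irreducible (hcover : ∀ v ∈ V, ∃ p ∈ Z, v ∈ trace V p)
    (hne : ∀ p ∈ Z, (trace V p).Nonempty)
    (hanti : ∀ p ∈ Z, ∀ q ∈ Z, trace V p ⊆ trace V q → p = q)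
    (hdom : ∀ v ∈ V, ∀ w ∈ V, (∀ p ∈ Z, w ∈ trace V p → v ∈ trace V p) → v = w)
    (hp : p ∈ Z) : trace V p = {traceMin V p} := by
  have hcard := card_le_card_of_not_dominated hcover hanti hdom
  -- an injective choice of a vertex in each trace hits every vertex, as `#V ≤ #Z`
  have hsum_eq : ∀ f : ℕ × ℕ → ℕ, InjOn f Z → (∀ p ∈ Z, f p ∈ trace V p) →
      ∑ p ∈ Z, f p = ∑ v ∈ V, v := fun f hf hfmem => by
    have himage : Z.image f = V := Finset.eq_of_subset_of_card_le
      (fun _ h => by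
        obtain ⟨p, hp, rfl⟩ := Finset.mem_image.1 h
        exact (mem_trace.1 (hfmem p hp)).1)
      (by rw [Finset.card_image_of_injOn hf]; exact hcard)
    rw [← himage, Finset.sum_image hf]
  have hsum : ∑ p ∈ Z, traceMin V p = ∑ p ∈ Z, traceMax V p := by
    rw [hsum_eq _ (injOn_traceMin hne hanti) fun p hp => (hne p hp).csInf_mem,
      hsum_eq _ (injOn_traceMax hne hanti) fun p hp => (hne p hp).csSup_mem]
  have hminmax := (Finset.sum_eq_sum_iff_of_le fun p hp =>
    (traceMin_le (hne p hp).csSup_mem)).1 hsum p hp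
  refine Finset.eq_singleton_iff_unique_mem.2 ⟨(hne p hp).csInf_mem, fun u hu => ?_⟩
  exact le_antisymm ((le_traceMax hu).trans hminmax.ge) (traceMin_le hu)

end Trace

/-- `Scr k z` is `avoidingComplex {1, …, k - 1} {(x, y - 1) | (x, y) ∈ z}`. -/
def avoidingComplex (V : Finset ℕ) (Z : Finset (ℕ × ℕ)) : Finset (Finset ℕ) :=
  V.powerset.filter fun σ => ∃ p ∈ Z, Disjoint σ (Finset.Icc p.1 p.2)

section AvoidingComplex

variable {V : Finset ℕ} {Z : Finset (ℕ × ℕ)} {σ : Finset ℕ} {p q : ℕ × ℕ} {v w : ℕ}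

lemma mem_avoidingComplex :
    σ ∈ avoidingComplex V Z ↔ σ ⊆ V ∧ ∃ p ∈ Z, Disjoint σ (Finset.Icc p.1 p.2) := by
  rw [avoidingComplex, Finset.mem_filter, Finset.mem_powerset]

lemma exists_eq_avoidingComplex_of_isScrope {k : ℕ} {S : Finset (Finset ℕ)} (hS : IsScrope k S) :
    ∃ Z, S = avoidingComplex (Finset.Icc 1 (k - 1)) Z := by
  rcases hS with rfl | ⟨z, -, rfl⟩
  · -- every face misses the empty interval `[1, 0]`
    refine ⟨{(1, 0)}, Finset.ext fun σ => ?_⟩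
    simp [mem_avoidingComplex]
  · refine ⟨(z.map fun p => (p.1, p.2 - 1)).toFinset, Finset.ext fun σ => ?_⟩
    rw [Scr, Finset.mem_filter, Finset.mem_powerset, mem_avoidingComplex]
    simp +contextual [scrPhi, Finset.subset_sdiff]

lemma disjoint_Icc_iff_trace (hσ : σ ⊆ V) :
    Disjoint σ (Finset.Icc p.1 p.2) ↔ Disjoint σ (trace V p) := by
  simp only [Finset.disjoint_left, mem_trace, Finset.mem_Icc]
  exact forall₂_congr fun u hu => by simp [hσ hu]

lemma avoidingComplex_erase_eq (hp : p ∈ Z) (hpq : p ≠ q) (hsub : trace V p ⊆ trace V q) :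
    avoidingComplex V (Z.erase q) = avoidingComplex V Z := by
  ext σ
  simp only [mem_avoidingComplex, Finset.mem_erase, and_congr_right_iff]
  refine fun hσ => ⟨fun ⟨r, hr, hσr⟩ => ⟨r, hr.2, hσr⟩, fun ⟨r, hr, hσr⟩ => ?_⟩
  by_cases hrq : r = q
  · subst hrq
    rw [disjoint_Icc_iff_trace hσ] at hσr
    exact ⟨p, ⟨hpq, hp⟩, (disjoint_Icc_iff_trace hσ).2 (hσr.mono_right hsub)⟩
  · exact ⟨r, ⟨hrq, hr⟩, hσr⟩

lemma insert_mem_avoidingComplex (hv : v ∈ V) (hp : p ∈ Z) (hσV : σ ⊆ V)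
    (hσp : Disjoint σ (Finset.Icc p.1 p.2)) (hvp : v ∉ trace V p) :
    insert v σ ∈ avoidingComplex V Z :=
  mem_avoidingComplex.2 ⟨Finset.insert_subset hv hσV, p, hp,
    Finset.disjoint_insert_left.2 ⟨fun h => hvp (mem_trace.2 ⟨hv, Finset.mem_Icc.1 h⟩), hσp⟩⟩

lemma image_update_subset_erase (hw : w ∈ V) (hvw : v ≠ w) (hσ : σ ⊆ V) :
    σ.image (update id v w) ⊆ V.erase v := by
  intro _ h
  obtain ⟨j, hj, rfl⟩ := Finset.mem_image.1 h
  by_cases hjv : j = v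
  · subst hjv; simpa [hvw.symm] using hw
  · simpa [hjv] using hσ hj

lemma disjoint_image_update (hw : w ∈ V) (hdom : ∀ p ∈ Z, w ∈ trace V p → v ∈ trace V p)
    (hp : p ∈ Z) (hσp : Disjoint σ (Finset.Icc p.1 p.2)) :
    Disjoint (σ.image (update id v w)) (Finset.Icc p.1 p.2) := by
  refine Finset.disjoint_left.2 fun _ h hjp => ?_
  obtain ⟨j, hj, rfl⟩ := Finset.mem_image.1 h
  by_cases hjv : j = v
  · subst hjv
    simp only [update_self] at hjp
    exact Finset.disjoint_left.1 hσp hj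
      (Finset.mem_Icc.2 (mem_trace.1 (hdom p hp (mem_trace.2 ⟨hw, Finset.mem_Icc.1 hjp⟩))).2)
  · simp only [update_of_ne hjv, id] at hjp
    exact Finset.disjoint_left.1 hσp hj hjp

lemma image_update_mem_avoidingComplex_erase (hw : w ∈ V) (hvw : v ≠ w)
    (hdom : ∀ p ∈ Z, w ∈ trace V p → v ∈ trace V p) (hσ : σ ∈ avoidingComplex V Z) :
    σ.image (update id v w) ∈ avoidingComplex (V.erase v) Z := by
  obtain ⟨hσV, p, hp, hσp⟩ := mem_avoidingComplex.1 hσ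
  exact mem_avoidingComplex.2 ⟨image_update_subset_erase hw hvw hσV, p, hp,
    disjoint_image_update hw hdom hp hσp⟩

theorem nonempty_homotopyEquiv_avoidingComplex_erase {m : ℕ} (hV : V ⊆ Finset.Icc 1 m)
    (hw : w ∈ V) (hvw : v ≠ w) (hdom : ∀ p ∈ Z, w ∈ trace V p → v ∈ trace V p) :
    Nonempty (geomReal m (avoidingComplex V Z) ≃ₕ geomReal m (avoidingComplex (V.erase v) Z)) := by
  refine nonempty_homotopyEquiv_geomReal_of_vertexMap (update id v w)
    (fun σ hσ => (mem_avoidingComplex.1 hσ).1.trans hV) (fun σ hσ => ?_)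
    (fun σ hσ => image_update_mem_avoidingComplex_erase hw hvw hdom hσ) (fun σ hσ => ?_) ?_
  · obtain ⟨hσV, hp⟩ := mem_avoidingComplex.1 hσ
    exact mem_avoidingComplex.2 ⟨hσV.trans (Finset.erase_subset _ _), hp⟩
  · obtain ⟨hσV, p, hp, hσp⟩ := mem_avoidingComplex.1 hσ
    refine mem_avoidingComplex.2 ⟨Finset.union_subset hσV
      ((image_update_subset_erase hw hvw hσV).trans (Finset.erase_subset _ _)), p, hp, ?_⟩
    exact Finset.disjoint_union_left.2 ⟨hσp, disjoint_image_update hw hdom hp hσp⟩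
  · intro σ hσ j hj
    have hjv : j ≠ v := Finset.ne_of_mem_erase ((mem_avoidingComplex.1 hσ).1 hj)
    simp [update_of_ne hjv]

theorem avoidingComplex_eq_ssubsets_of_irreducible (hV : V.Nonempty)
    (hcone : ∀ v, ¬ ∀ σ ∈ avoidingComplex V Z, insert v σ ∈ avoidingComplex V Z)
    (hdom : ∀ v ∈ V, ∀ w ∈ V, (∀ p ∈ Z, w ∈ trace V p → v ∈ trace V p) → v = w)
    (hanti : ∀ p ∈ Z, ∀ q ∈ Z, trace V p ⊆ trace V q → p = q) :
    avoidingComplex V Z = V.ssubsets := by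
  have hcover : ∀ v ∈ V, ∃ p ∈ Z, v ∈ trace V p := fun v hv => by
    by_contra! h
    refine hcone v fun σ hσ => ?_
    obtain ⟨hσV, p, hp, hσp⟩ := mem_avoidingComplex.1 hσ
    exact insert_mem_avoidingComplex hv hp hσV hσp (h p hp)
  have hne : ∀ p ∈ Z, (trace V p).Nonempty := fun p hp => by
    by_contra! h
    obtain ⟨v, hv⟩ := hV
    refine hcone v fun σ hσ => ?_
    have hσV := (mem_avoidingComplex.1 hσ).1
    exact insert_mem_avoidingComplex hv hp hσV
      ((disjoint_Icc_iff_trace hσV).2 (by simp [h])) (by simp [h])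
  have hsingle := fun p hp => trace_eq_singleton_of_irreducible hcover hne hanti hdom (p := p) hp
  ext σ
  rw [mem_avoidingComplex, Finset.mem_ssubsets]
  constructor
  · rintro ⟨hσV, p, hp, hσp⟩
    refine Finset.ssubset_iff_subset_ne.2 ⟨hσV, fun hσ => ?_⟩
    obtain ⟨u, hu⟩ := hne p hp
    rw [disjoint_Icc_iff_trace hσV] at hσp
    exact Finset.disjoint_left.1 hσp (hσ ▸ (mem_trace.1 hu).1) hu
  · intro hσV
    obtain ⟨v, hv, hvσ⟩ := Finset.exists_of_ssubset hσV
    obtain ⟨p, hp, hvp⟩ := hcover v hv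
    refine ⟨hσV.subset, p, hp, (disjoint_Icc_iff_trace hσV.subset).2 ?_⟩
    rw [hsingle p hp, Finset.disjoint_singleton_right]
    rw [hsingle p hp, Finset.mem_singleton] at hvp
    exact hvp ▸ hvσ

end AvoidingComplex

def ContractibleOrSphere (X : Type*) [TopologicalSpace X] : Prop :=
  ContractibleSpace X ∨
    ∃ d : ℕ, Nonempty (X ≃ₕ Metric.sphere (0 : EuclideanSpace ℝ (Fin (d + 1))) 1)

lemma ContractibleOrSphere.of_homotopyEquiv {X Y : Type*} [TopologicalSpace X]
    [TopologicalSpace Y] (e : X ≃ₕ Y) : ContractibleOrSphere Y → ContractibleOrSphere X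
  | .inl _ => .inl e.contractibleSpace
  | .inr ⟨d, ⟨e'⟩⟩ => .inr ⟨d, ⟨e.trans e'⟩⟩

theorem contractibleOrSphere_geomReal_avoidingComplex {m : ℕ} {V : Finset ℕ}
    {Z : Finset (ℕ × ℕ)} (hV : V ⊆ Finset.Icc 1 m)
    (hne : ∃ σ ∈ avoidingComplex V Z, σ.Nonempty) :
    ContractibleOrSphere (geomReal m (avoidingComplex V Z)) := by
  induction hN : V.card + Z.card using Nat.strong_induction_on generalizing V Z with
  | _ N ih =>
  obtain ⟨σ₀, hσ₀, hσ₀ne⟩ := hne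
  by_cases hcone : ∃ v, ∀ σ ∈ avoidingComplex V Z, insert v σ ∈ avoidingComplex V Z
  · obtain ⟨v, hv⟩ := hcone
    exact .inl (contractibleSpace_geomReal_of_cone ⟨σ₀, hσ₀⟩ hv)
  by_cases hdom : ∀ v ∈ V, ∀ w ∈ V, (∀ p ∈ Z, w ∈ trace V p → v ∈ trace V p) → v = w
  swap
  · push Not at hdom
    obtain ⟨v, hv, w, hw, hdom, hvw⟩ := hdom
    obtain ⟨e⟩ := nonempty_homotopyEquiv_avoidingComplex_erase hV hw hvw hdom
    refine .of_homotopyEquiv e (ih _ ?_ ((Finset.erase_subset _ _).trans hV)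
      ⟨_, image_update_mem_avoidingComplex_erase hw hvw hdom hσ₀, hσ₀ne.image _⟩ rfl)
    rw [← hN, Finset.card_erase_of_mem hv]
    have := Finset.card_pos.2 ⟨v, hv⟩
    omega
  by_cases hanti : ∀ p ∈ Z, ∀ q ∈ Z, trace V p ⊆ trace V q → p = q
  swap
  · push Not at hanti
    obtain ⟨p, hp, q, hq, hsub, hpq⟩ := hanti
    rw [← avoidingComplex_erase_eq hp hpq hsub] at hσ₀ ⊢
    refine ih _ ?_ hV ⟨σ₀, hσ₀, hσ₀ne⟩ rfl
    rw [← hN, Finset.card_erase_of_mem hq]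
    have := Finset.card_pos.2 ⟨q, hq⟩
    omega
  have hVne : V.Nonempty := hσ₀ne.mono (mem_avoidingComplex.1 hσ₀).1
  rw [avoidingComplex_eq_ssubsets_of_irreducible hVne (fun v h => hcone ⟨v, h⟩) hdom hanti]
    at hσ₀ ⊢
  have hσ₀card := Finset.card_pos.2 hσ₀ne
  have hσ₀V := Finset.card_lt_card (Finset.mem_ssubsets.1 hσ₀)
  obtain ⟨e⟩ := nonempty_homeomorph_sphere_geomReal_ssubsets hV (d := V.card - 2) (by omega)
  exact .inr ⟨_, ⟨e.toHomotopyEquiv⟩⟩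

theorem scrope_contractible_or_sphere_general (k : ℕ) (S : Finset (Finset ℕ))
    (hS : IsScrope k S) (hne : ∃ σ ∈ S, σ.Nonempty) :
    ContractibleSpace (geomReal (k - 1) S) ∨
      ∃ d : ℕ, Nonempty
        (ContinuousMap.HomotopyEquiv (geomReal (k - 1) S)
          (Metric.sphere (0 : EuclideanSpace ℝ (Fin (d + 1))) 1)) := by
  obtain ⟨Z, rfl⟩ := exists_eq_avoidingComplex_of_isScrope hS
  exact contractibleOrSphere_geomReal_avoidingComplex subset_rfl hne

/-- Every Scrope complex containing at least one nonempty face has geometric realization that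
is either contractible or homotopy equivalent to a sphere `S^d` for some `d ≥ 0`. -/
theorem scrope_contractible_or_sphere (k : ℕ) (hk : 1 ≤ k) (S : Finset (Finset ℕ))
    (hS : IsScrope k S) (hne : ∃ σ ∈ S, σ.Nonempty) :
    ContractibleSpace (geomReal (k - 1) S) ∨
      ∃ d : ℕ, Nonempty
        (ContinuousMap.HomotopyEquiv (geomReal (k - 1) S)
          (Metric.sphere (0 : EuclideanSpace ℝ (Fin (d + 1))) 1)) :=
  scrope_contractible_or_sphere_general k S hS hne

end ScropePaper
end

section
/- Every Scrope complex on {1,…,k−1} is either the full simplex 2^{{1,…,k−1}} or equals Scr(k,z) for some list z = ((x_1,y_1),…,(x_r,y_r)) satisfying 1 ≤ x_1 < x_2 < ⋯ < x_r < k, 1 < y_1 < y_2 < ⋯ < y_r ≤ k, and x_i < y_i for every i. -/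
/-! `φ_p ⊆ φ_q` whenever the interval `[q.1, q.2)` lies inside `[p.1, p.2)`, so `Scr(k, z)` does
not change when `z` is cut down to the pairs whose intervals are inclusion-minimal. These
intervals form an antichain: no two share a left endpoint, and of two of them the one starting
further right also ends further right. Listed by left endpoint, both endpoints strictly increase. -/

namespace ScropePaper

theorem _root_.Finset.exists_le_maximalFor {ι α : Type*} [Preorder α] (f : ι → α)
    {s : Finset ι} {i : ι} (hi : i ∈ s) : ∃ j, f i ≤ f j ∧ MaximalFor (· ∈ s) f j := by
  classical
  obtain ⟨j, hj, hjmax⟩ :=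
    {j ∈ s | f i ≤ f j}.exists_maximalFor f ⟨i, Finset.mem_filter.2 ⟨hi, le_rfl⟩⟩
  rw [Finset.mem_filter] at hj
  exact ⟨j, hj.2, hj.1, fun k hk hjk =>
    hjmax (Finset.mem_filter.2 ⟨hk, hj.2.trans hjk⟩) hjk⟩

/-- `nestKey p ≤ nestKey q` says that the interval `[q.1, q.2)` lies inside `[p.1, p.2)`. -/
def nestKey (p : ℕ × ℕ) : ℕ × ℕᵒᵈ := (p.1, OrderDual.toDual p.2)

theorem nestKey_le_nestKey {p q : ℕ × ℕ} : nestKey p ≤ nestKey q ↔ p.1 ≤ q.1 ∧ q.2 ≤ p.2 :=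
  Iff.rfl

theorem nestKey_injective : Function.Injective nestKey := fun p q h => by
  simpa [nestKey, Prod.ext_iff] using h

theorem scrPhi_subset_scrPhi {k x y x' y' : ℕ} (hx : x ≤ x') (hy : y' ≤ y) :
    scrPhi k x y ⊆ scrPhi k x' y' :=
  Finset.sdiff_subset_sdiff le_rfl (Finset.Icc_subset_Icc hx (Nat.sub_le_sub_right hy 1))

theorem Scr_subset_Scr {k : ℕ} {z z' : List (ℕ × ℕ)}
    (h : ∀ p ∈ z, ∃ q ∈ z', nestKey p ≤ nestKey q) : Scr k z ⊆ Scr k z' := by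
  intro σ
  simp only [Scr, Finset.mem_filter]
  rintro ⟨hσ, p, hp, hσp⟩
  obtain ⟨q, hq, hpq1, hpq2⟩ := h p hp
  exact ⟨hσ, q, hq, hσp.trans (scrPhi_subset_scrPhi hpq1 hpq2)⟩

theorem pairwise_mergeSort_of_antichain {l : List (ℕ × ℕ)} (hl : l.Nodup)
    (hanti : ∀ p ∈ l, ∀ q ∈ l, nestKey p ≤ nestKey q → p = q) :
    (l.mergeSort fun p q => p.1 ≤ q.1).Pairwise fun p q => p.1 < q.1 ∧ p.2 < q.2 := by
  have hsorted := l.pairwise_mergeSort (le := fun p q => p.1 ≤ q.1)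
    (fun a b c hab hbc => by simp only [decide_eq_true_eq] at *; omega)
    (fun a b => by simp only [Bool.or_eq_true, decide_eq_true_eq]; omega)
  have hnodup := (l.mergeSort_perm fun p q => p.1 ≤ q.1).nodup_iff.2 hl
  refine (hsorted.and hnodup).imp_of_mem fun {p q} hp hq ⟨hpq, hne⟩ => ?_
  rw [List.mem_mergeSort] at hp hq
  have hpq_not_nested := mt (hanti p hp q hq) hne
  have hqp_not_nested := mt (hanti q hq p hp) (Ne.symm hne)
  simp only [nestKey_le_nestKey, decide_eq_true_eq] at hpq hpq_not_nested hqp_not_nested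
  omega

open Classical in
noncomputable def innermost (z : List (ℕ × ℕ)) : List (ℕ × ℕ) :=
  {p ∈ z.toFinset | MaximalFor (· ∈ z) nestKey p}.toList.mergeSort fun p q => p.1 ≤ q.1

theorem mem_innermost {z : List (ℕ × ℕ)} {p : ℕ × ℕ} :
    p ∈ innermost z ↔ MaximalFor (· ∈ z) nestKey p := by
  simp only [innermost, List.mem_mergeSort, Finset.mem_toList, Finset.mem_filter,
    List.mem_toFinset, and_iff_right_iff_imp]
  exact fun h => h.1

theorem pairwise_innermost (z : List (ℕ × ℕ)) :
    (innermost z).Pairwise fun p q => p.1 < q.1 ∧ p.2 < q.2 := by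
  refine pairwise_mergeSort_of_antichain (Finset.nodup_toList _) fun p hp q hq hpq => ?_
  simp only [Finset.mem_toList, Finset.mem_filter] at hp hq
  exact nestKey_injective (le_antisymm hpq (hp.2.2 hq.2.1 hpq))

theorem Scr_innermost (k : ℕ) (z : List (ℕ × ℕ)) : Scr k (innermost z) = Scr k z := by
  refine subset_antisymm (Scr_subset_Scr fun p hp => ⟨p, (mem_innermost.1 hp).1, le_rfl⟩)
    (Scr_subset_Scr fun p hp => ?_)
  obtain ⟨q, hpq, hq⟩ := Finset.exists_le_maximalFor nestKey (List.mem_toFinset.2 hp)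
  simp only [List.mem_toFinset] at hq
  exact ⟨q, mem_innermost.2 hq, hpq⟩

theorem isScrope_normal_form_general (k : ℕ) (S : Finset (Finset ℕ))
    (hS : IsScrope k S) :
    S = (Finset.Icc 1 (k - 1)).powerset ∨
      ∃ z : List (ℕ × ℕ),
        (∀ p ∈ z, 1 ≤ p.1 ∧ p.1 < p.2 ∧ p.2 ≤ k) ∧
        (∀ p ∈ z, p.1 < k) ∧
        (∀ p ∈ z, 1 < p.2) ∧
        z.Pairwise (fun p q => p.1 < q.1 ∧ p.2 < q.2) ∧
        S = Scr k z := by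
  rcases hS with hfull | ⟨z, hz, rfl⟩
  · exact Or.inl hfull
  have hbounds : ∀ p ∈ innermost z, 1 ≤ p.1 ∧ p.1 < p.2 ∧ p.2 ≤ k :=
    fun p hp => hz p (mem_innermost.1 hp).1
  refine Or.inr ⟨innermost z, hbounds, fun p hp => ?_, fun p hp => ?_, pairwise_innermost z,
    (Scr_innermost k z).symm⟩ <;> · have := hbounds p hp; omega

/-- Every Scrope complex on `{1, …, k-1}` is either the full simplex `2^{[1,k-1]}` or equals
`Scr(k, z)` for a list `z = ((x_1,y_1), …, (x_r,y_r))` with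
`1 ≤ x_1 < ⋯ < x_r < k`, `1 < y_1 < ⋯ < y_r ≤ k` and `x_i < y_i` for every `i`. -/
theorem isScrope_normal_form (k : ℕ) (hk : 1 ≤ k) (S : Finset (Finset ℕ))
    (hS : IsScrope k S) :
    S = (Finset.Icc 1 (k - 1)).powerset ∨
      ∃ z : List (ℕ × ℕ),
        (∀ p ∈ z, 1 ≤ p.1 ∧ p.1 < p.2 ∧ p.2 ≤ k) ∧
        (∀ p ∈ z, p.1 < k) ∧
        (∀ p ∈ z, 1 < p.2) ∧
        z.Pairwise (fun p q => p.1 < q.1 ∧ p.2 < q.2) ∧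
        S = Scr k z :=
  isScrope_normal_form_general k S hS

end ScropePaper
end

section
/- The class of Scrope complexes is stable under taking induced subcomplexes: if Σ is a Scrope complex on {1,…,k−1} and T ⊆ {1,…,k−1}, then the induced subcomplex Σ|T = {σ ∈ Σ : σ ⊆ T}, after relabeling the vertices of T via the unique order-preserving bijection T → {1,…,|T|}, is a Scrope complex on {1,…,|T|}. -/
namespace ScropePaper

/-- The unique order-preserving bijection from a finite set `T ⊆ ℕ` onto `{1, …, |T|}`:
`j` is sent to (its index in the increasing enumeration of `T`) plus one. -/
def relabel (T : Finset ℕ) (j : ℕ) : ℕ := (T.sort (· ≤ ·)).idxOf j + 1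

/-!
On `T`, `relabel T` is `t ↦ rank T t + 1` with `rank T x = #{t ∈ T | t < x}`, so it carries
`T ∩ φ(x, y) = T \ [x, y-1]` onto `{1, …, |T|} \ [rank T x + 1, rank T y]`, the generator of
`Scr(|T|+1, ·)` at the pair `(rank T x + 1, rank T y + 1)`. Hence the induced complex is the
Scrope complex on the pairs of ranks. A pair whose interval misses `T` collapses to `x' = y'`,
whose generator is the whole vertex set; the complex is then the full simplex, which is also how
the full simplex itself is written as `Scr(k, [(1, 1)])`.
-/

open Finset

theorem _root_.List.idxOf_eq_countP_lt_of_pairwise {α : Type*} [LinearOrder α] {l : List α}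
    (hl : l.Pairwise (· < ·)) {t : α} (ht : t ∈ l) : l.idxOf t = l.countP (· < t) := by
  induction l with
  | nil => simp at ht
  | cons a l ih =>
    obtain ⟨ha, hl⟩ := List.pairwise_cons.mp hl
    rcases List.mem_cons.mp ht with rfl | htl
    · rw [List.idxOf_cons_self, eq_comm]
      simpa [List.countP_eq_zero] using fun s hs => (ha s hs).le
    · rw [List.idxOf_cons_ne _ (ha t htl).ne, List.countP_cons, ih hl htl]
      simp [ha t htl]

section Rank

variable (T : Finset ℕ)

def rank (x : ℕ) : ℕ := #{t ∈ T | t < x}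

theorem rank_mono : Monotone (rank T) :=
  fun _ _ h => card_le_card <| monotone_filter_right _ fun _ _ hs => hs.trans_le h

theorem rank_le_card (x : ℕ) : rank T x ≤ #T := card_filter_le _ _

variable {T}

theorem rank_lt_rank {t x : ℕ} (ht : t ∈ T) (h : t < x) : rank T t < rank T x :=
  card_lt_card <| ssubset_iff_of_subset (monotone_filter_right _ fun _ _ hs => hs.trans h) |>.2
    ⟨t, mem_filter.2 ⟨ht, h⟩, by simp⟩

theorem relabel_eq_rank_add_one {t : ℕ} (ht : t ∈ T) : relabel T t = rank T t + 1 := by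
  rw [relabel, List.idxOf_eq_countP_lt_of_pairwise (sortedLT_sort T).pairwise
    ((mem_sort _).2 ht), (sort_perm_toList _ _).countP_eq, rank, ← Multiset.coe_countP,
    coe_toList, Multiset.countP_eq_card_filter]
  rfl

theorem rank_lt_relabel_iff {t : ℕ} (ht : t ∈ T) (x : ℕ) : rank T x < relabel T t ↔ x ≤ t := by
  rw [relabel_eq_rank_add_one ht, Nat.lt_succ_iff]
  refine ⟨fun h => ?_, fun h => rank_mono T h⟩
  by_contra! hx
  exact (rank_lt_rank ht hx).not_ge h

theorem relabel_le_rank_iff {t : ℕ} (ht : t ∈ T) (y : ℕ) : relabel T t ≤ rank T y ↔ t < y := by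
  rw [relabel_eq_rank_add_one ht, Nat.succ_le_iff]
  refine ⟨fun h => ?_, rank_lt_rank ht⟩
  by_contra! hy
  exact (rank_mono T hy).not_gt h

theorem relabel_injOn : Set.InjOn (relabel T) T := by
  intro s hs t ht hst
  by_contra hne
  rcases lt_or_gt_of_ne hne with h | h
  · exact (relabel_le_rank_iff hs t).2 h |>.not_gt (hst ▸ (rank_lt_relabel_iff ht t).2 le_rfl)
  · exact (relabel_le_rank_iff ht s).2 h |>.not_gt (hst ▸ (rank_lt_relabel_iff hs s).2 le_rfl)

variable (T)

theorem image_relabel : T.image (relabel T) = Icc 1 #T := by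
  refine eq_of_subset_of_card_le (fun j hj => ?_) ?_
  · obtain ⟨t, ht, rfl⟩ := mem_image.mp hj
    rw [relabel_eq_rank_add_one ht, mem_Icc]
    exact ⟨le_add_self, (rank_lt_rank ht t.lt_succ_self).trans_le (rank_le_card T _)⟩
  · rw [Nat.card_Icc, card_image_of_injOn relabel_injOn]
    omega

theorem image_inter_scrPhi_relabel {k : ℕ} (hT : T ⊆ Icc 1 (k - 1)) (x y : ℕ) :
    (T ∩ scrPhi k x y).image (relabel T) = scrPhi (#T + 1) (rank T x + 1) (rank T y + 1) := by
  ext j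
  simp only [scrPhi, mem_image, mem_inter, mem_sdiff, mem_Icc, Nat.add_sub_cancel,
    ← image_relabel T]
  constructor
  · rintro ⟨t, ⟨ht, ht₁, hxy⟩, rfl⟩
    have := rank_lt_relabel_iff ht x
    have := relabel_le_rank_iff ht y
    exact ⟨⟨t, ht, rfl⟩, by omega⟩
  · rintro ⟨⟨t, ht, rfl⟩, hxy⟩
    have ht₁ := mem_Icc.1 (hT ht)
    have := rank_lt_relabel_iff ht x
    have := relabel_le_rank_iff ht y
    exact ⟨t, ⟨ht, ht₁, by omega⟩, rfl⟩

end Rank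

section GeneratedComplex

variable {α β ι : Type*} [DecidableEq α]

def generatedComplex (V : Finset α) (A : ι → Finset α) (z : List ι) : Finset (Finset α) :=
  {σ ∈ V.powerset | ∃ i ∈ z, σ ⊆ A i}

theorem filter_subset_generatedComplex {V T : Finset α} (hT : T ⊆ V) (A : ι → Finset α)
    (z : List ι) : {σ ∈ generatedComplex V A z | σ ⊆ T} = generatedComplex T A z := by
  ext σ
  simp only [generatedComplex, mem_filter, mem_powerset]
  exact ⟨fun ⟨⟨_, h⟩, hσ⟩ => ⟨hσ, h⟩, fun ⟨hσ, h⟩ => ⟨⟨hσ.trans hT, h⟩, hσ⟩⟩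

theorem image_generatedComplex [DecidableEq β] (T : Finset α) (f : α → β)
    (A : ι → Finset α) (z : List ι) :
    (generatedComplex T A z).image (image f) =
      generatedComplex (T.image f) (fun i => (T ∩ A i).image f) z := by
  ext τ
  simp only [generatedComplex, mem_filter, mem_image, mem_powerset]
  constructor
  · rintro ⟨σ, ⟨hσT, i, hi, hσA⟩, rfl⟩
    exact ⟨image_subset_image hσT, i, hi, image_subset_image (subset_inter hσT hσA)⟩
  · rintro ⟨hτ, i, hi, hτA⟩
    obtain ⟨σ, hσ, rfl⟩ := subset_image_iff.1 hτA
    have hσT : σ ⊆ T := hσ.trans inter_subset_left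
    exact ⟨σ, ⟨hσT, i, hi, hσ.trans inter_subset_right⟩, rfl⟩

theorem generatedComplex_map (V : Finset α) (A : β → Finset α) (g : ι → β) (z : List ι) :
    generatedComplex V A (z.map g) = generatedComplex V (A ∘ g) z := by
  simp [generatedComplex]

end GeneratedComplex

theorem Scr_eq_generatedComplex (k : ℕ) (z : List (ℕ × ℕ)) :
    Scr k z = generatedComplex (Icc 1 (k - 1)) (fun p => scrPhi k p.1 p.2) z := rfl

theorem scrPhi_self (k : ℕ) {x : ℕ} (hx : 1 ≤ x) : scrPhi k x x = Icc 1 (k - 1) := by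
  rw [scrPhi, Icc_eq_empty (a := x) (b := x - 1) (by omega), sdiff_empty]

theorem Scr_eq_powerset_of_mem {k x : ℕ} {z : List (ℕ × ℕ)} (hx : 1 ≤ x) (hz : (x, x) ∈ z) :
    Scr k z = (Icc 1 (k - 1)).powerset :=
  filter_true_of_mem fun _ hσ => ⟨(x, x), hz, scrPhi_self k hx ▸ mem_powerset.1 hσ⟩

theorem isScrope_Scr {k : ℕ} {z : List (ℕ × ℕ)} (hz : ∀ p ∈ z, 1 ≤ p.1 ∧ p.1 ≤ p.2 ∧ p.2 ≤ k) :
    IsScrope k (Scr k z) := by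
  by_cases hdiag : ∃ p ∈ z, p.1 = p.2
  · obtain ⟨⟨x, y⟩, hp, hxy : x = y⟩ := hdiag
    subst hxy
    exact Or.inl (Scr_eq_powerset_of_mem (hz _ hp).1 hp)
  · push Not at hdiag
    exact Or.inr ⟨z, fun p hp => ⟨(hz p hp).1, (hz p hp).2.1.lt_of_ne (hdiag p hp),
      (hz p hp).2.2⟩, rfl⟩

theorem IsScrope.exists_eq_Scr {k : ℕ} (hk : 1 ≤ k) {S : Finset (Finset ℕ)} (hS : IsScrope k S) :
    ∃ z : List (ℕ × ℕ), (∀ p ∈ z, 1 ≤ p.1 ∧ p.1 ≤ p.2 ∧ p.2 ≤ k) ∧ S = Scr k z := by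
  rcases hS with rfl | ⟨z, hz, rfl⟩
  · exact ⟨[(1, 1)], by simpa using hk,
      (Scr_eq_powerset_of_mem le_rfl (List.mem_singleton_self _)).symm⟩
  · exact ⟨z, fun p hp => ⟨(hz p hp).1, (hz p hp).2.1.le, (hz p hp).2.2⟩, rfl⟩

/-- The class of Scrope complexes is stable under taking induced subcomplexes: if `Σ` is a
Scrope complex on `{1, …, k-1}` and `T ⊆ {1, …, k-1}`, then the induced subcomplex
`Σ|T = {σ ∈ Σ : σ ⊆ T}`, relabelled via the unique order-preserving bijection
`T → {1, …, |T|}`, is a Scrope complex on `{1, …, |T|}`. -/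
theorem isScrope_induced (k : ℕ) (hk : 1 ≤ k) (S : Finset (Finset ℕ))
    (hS : IsScrope k S) (T : Finset ℕ) (hT : T ⊆ Finset.Icc 1 (k - 1)) :
    IsScrope (T.card + 1)
      ((S.filter fun σ => σ ⊆ T).image fun σ => σ.image (relabel T)) := by
  obtain ⟨z, hz, rfl⟩ := hS.exists_eq_Scr hk
  have hinduced : ((Scr k z).filter fun σ => σ ⊆ T).image (fun σ => σ.image (relabel T)) =
      Scr (#T + 1) (z.map fun p => (rank T p.1 + 1, rank T p.2 + 1)) := by
    rw [Scr_eq_generatedComplex, filter_subset_generatedComplex hT, image_generatedComplex,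
      image_relabel, Scr_eq_generatedComplex, generatedComplex_map, Nat.add_sub_cancel]
    simp only [image_inter_scrPhi_relabel T hT]
    rfl
  rw [hinduced]
  refine isScrope_Scr fun q hq => ?_
  obtain ⟨p, hp, rfl⟩ := List.mem_map.1 hq
  exact ⟨le_add_self, Nat.add_le_add_right (rank_mono T (hz p hp).2.1) 1,
    Nat.add_le_add_right (rank_le_card T _) 1⟩

end ScropePaper
end

section
/- The class 𝒰 of all order-decomposable ordered complexes is a Hopf class. -/
/-!
Restriction and contraction by an initial segment preserve order-decomposability: for a nonempty
proper segment this is the definition; the empty segment gives `Σ|∅ ∈ {∅, {∅}}` and `Σ/∅ = Σ`;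
the full segment gives `Σ` and the link `{∅}` of a facet; and a complex with a single facet is a
simplex, whose restrictions and contractions are again simplices.

For joins, an initial segment of a shuffle of `w₁` and `w₂` is a shuffle of initial segments of
`w₁` and `w₂`, with the complementary final segments shuffled as well. Restriction commutes with
joins, and so does contraction, because the greedy computation of the lexicographically smallest
facet runs independently on the two factors of a join. A facet of a join is the union of facets
of its factors, so joins of pure complexes are pure, and induction on the length of the shuffle
finishes the argument.
-/

namespace OrderedComplexes

variable {α : Type*} [DecidableEq α]

/-- A (downward closed) simplicial complex, as a finite set of faces. -/
def IsComplex (S : Finset (Finset α)) : Prop := ∀ σ ∈ S, ∀ τ ⊆ σ, τ ∈ S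

/-- `σ` is a facet (maximal face) of the complex `S`. -/
def IsFacet (S : Finset (Finset α)) (σ : Finset α) : Prop :=
  σ ∈ S ∧ ∀ τ ∈ S, σ ⊆ τ → σ = τ

/-- A complex is pure if all of its facets have the same cardinality. -/
def IsPure (S : Finset (Finset α)) : Prop :=
  ∀ σ τ, IsFacet S σ → IsFacet S τ → σ.card = τ.card

/-- The restriction `Σ|T = {σ ∈ Σ : σ ⊆ T}`. -/
def restrictC (S : Finset (Finset α)) (T : Finset α) : Finset (Finset α) :=
  S.filter (· ⊆ T)

/-- The link of `τ` in `Σ`: `{ρ ∈ Σ : ρ ∩ τ = ∅ and ρ ∪ τ ∈ Σ}`. -/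
def linkC (S : Finset (Finset α)) (τ : Finset α) : Finset (Finset α) :=
  S.filter fun ρ => Disjoint ρ τ ∧ ρ ∪ τ ∈ S

/-- The lexicographically smallest (with respect to the linear order `w`, encoded as a
duplicate-free list) facet of the complex `S`, computed greedily along `w`. -/
def lexMinFacet (w : List α) (S : Finset (Finset α)) : Finset α :=
  w.foldl (fun τ a => if insert a τ ∈ S then insert a τ else τ) ∅

/-- The contraction `Σ/A`: the link in `Σ` of the lexicographically smallest facet of the
restriction `Σ|A`. -/
def contractC (w : List α) (S : Finset (Finset α)) (A : Finset α) : Finset (Finset α) :=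
  linkC S (lexMinFacet w (restrictC S A))

/-- An ordered complex: a linear order `w` on a finite ground set (a duplicate-free list)
together with a simplicial complex whose faces are subsets of the ground set. -/
def IsOrderedComplex (w : List α) (S : Finset (Finset α)) : Prop :=
  w.Nodup ∧ (∀ σ ∈ S, σ ⊆ w.toFinset) ∧ IsComplex S

/-- The join of two complexes: `{σ₁ ∪ σ₂ : σ₁ ∈ Σ₁, σ₂ ∈ Σ₂}`. -/
def joinC (S₁ S₂ : Finset (Finset α)) : Finset (Finset α) :=
  (S₁ ×ˢ S₂).image fun p => p.1 ∪ p.2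

/-- `w` is a shuffle of the linear orders `w₁` and `w₂`: a linear order on the union of the
two ground sets restricting to `wᵢ` on each. -/
def IsShuffle (w₁ w₂ w : List α) : Prop :=
  w.Nodup ∧ w.toFinset = w₁.toFinset ∪ w₂.toFinset ∧
    w.filter (fun a => decide (a ∈ w₁.toFinset)) = w₁ ∧
    w.filter (fun a => decide (a ∈ w₂.toFinset)) = w₂

/-- A Hopf class: a class of pure ordered complexes closed under shuffled joins, and under
restriction and contraction by initial segments (with all such restrictions pure).
Here the initial segment of `w` of length `k` is `(w.take k).toFinset`, the order induced on
it is `w.take k`, and the order induced on its complement is `w.drop k`. -/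
def IsHopfClass (Q : Set (List α × Finset (Finset α))) : Prop :=
  (∀ p ∈ Q, IsOrderedComplex p.1 p.2 ∧ IsPure p.2) ∧
  (∀ p₁ ∈ Q, ∀ p₂ ∈ Q, Disjoint p₁.1.toFinset p₂.1.toFinset →
    ∀ w, IsShuffle p₁.1 p₂.1 w → (w, joinC p₁.2 p₂.2) ∈ Q) ∧
  (∀ p ∈ Q, ∀ k : ℕ,
    IsPure (restrictC p.2 (p.1.take k).toFinset) ∧
    (p.1.take k, restrictC p.2 (p.1.take k).toFinset) ∈ Q) ∧
  (∀ p ∈ Q, ∀ k : ℕ,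
    (p.1.drop k, contractC p.1 p.2 (p.1.take k).toFinset) ∈ Q)

/-- Order-decomposability: either `Σ` has exactly one facet, or `Σ` is pure and for every
nonempty proper initial segment `A` of `w` both `Σ|A` and `Σ/A` are pure and (with their
induced orders) order-decomposable. -/
inductive OrderDecomposable : List α → Finset (Finset α) → Prop
  | unique (w : List α) (S : Finset (Finset α)) (σ : Finset α)
      (hσ : IsFacet S σ) (huniq : ∀ τ, IsFacet S τ → τ = σ) :
      OrderDecomposable w S
  | pure (w : List α) (S : Finset (Finset α)) (hpure : IsPure S)
      (hres_pure : ∀ k : ℕ, 0 < k → k < w.length →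
        IsPure (restrictC S (w.take k).toFinset))
      (hcon_pure : ∀ k : ℕ, 0 < k → k < w.length →
        IsPure (contractC w S (w.take k).toFinset))
      (hres : ∀ k : ℕ, 0 < k → k < w.length →
        OrderDecomposable (w.take k) (restrictC S (w.take k).toFinset))
      (hcon : ∀ k : ℕ, 0 < k → k < w.length →
        OrderDecomposable (w.drop k) (contractC w S (w.take k).toFinset)) :
      OrderDecomposable w S

@[simp]
lemma mem_restrictC {S : Finset (Finset α)} {T σ : Finset α} :
    σ ∈ restrictC S T ↔ σ ∈ S ∧ σ ⊆ T := Finset.mem_filter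

@[simp]
lemma mem_linkC {S : Finset (Finset α)} {τ ρ : Finset α} :
    ρ ∈ linkC S τ ↔ ρ ∈ S ∧ Disjoint ρ τ ∧ ρ ∪ τ ∈ S := Finset.mem_filter

lemma mem_joinC {S₁ S₂ : Finset (Finset α)} {σ : Finset α} :
    σ ∈ joinC S₁ S₂ ↔ ∃ σ₁ ∈ S₁, ∃ σ₂ ∈ S₂, σ₁ ∪ σ₂ = σ := by
  simp [joinC, and_assoc]

omit [DecidableEq α] in
lemma exists_isFacet_superset {S : Finset (Finset α)} {τ : Finset α} (hτ : τ ∈ S) :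
    ∃ σ, τ ⊆ σ ∧ IsFacet S σ := by
  obtain ⟨σ, hτσ, hmax⟩ := Finset.exists_le_maximal S hτ
  exact ⟨σ, hτσ, hmax.1, fun ρ hρ hσρ => le_antisymm hσρ (hmax.2 hρ hσρ)⟩

namespace IsComplex

variable {S : Finset (Finset α)}

omit [DecidableEq α] in
lemma empty_mem (hS : IsComplex S) (hne : S.Nonempty) : ∅ ∈ S :=
  hS _ hne.choose_spec _ (Finset.empty_subset _)

lemma restrictC (hS : IsComplex S) (T : Finset α) : IsComplex (restrictC S T) := by
  intro σ hσ τ hτσ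
  rw [mem_restrictC] at hσ ⊢
  exact ⟨hS σ hσ.1 τ hτσ, hτσ.trans hσ.2⟩

lemma linkC (hS : IsComplex S) (τ : Finset α) : IsComplex (linkC S τ) := by
  intro ρ hρ ρ' hρ'
  rw [mem_linkC] at hρ ⊢
  exact ⟨hS ρ hρ.1 ρ' hρ', hρ.2.1.mono_left hρ', hS _ hρ.2.2 _ (Finset.union_subset_union_left hρ')⟩

omit [DecidableEq α] in
lemma eq_powerset_of_isFacet_unique (hS : IsComplex S) {σ : Finset α} (hσ : IsFacet S σ)
    (huniq : ∀ τ, IsFacet S τ → τ = σ) : S = σ.powerset := by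
  ext τ
  rw [Finset.mem_powerset]
  refine ⟨fun hτ => ?_, hS σ hσ.1 τ⟩
  obtain ⟨ρ, hτρ, hρ⟩ := exists_isFacet_superset hτ
  exact huniq ρ hρ ▸ hτρ

end IsComplex

lemma IsFacet.linkC_eq_singleton_empty {S : Finset (Finset α)} {σ : Finset α} (hσ : IsFacet S σ)
    (hS : IsComplex S) : linkC S σ = {∅} := by
  ext ρ
  simp only [mem_linkC, Finset.mem_singleton]
  constructor
  · rintro ⟨-, hdisj, hρσ⟩
    have hσρ : σ = ρ ∪ σ := hσ.2 _ hρσ Finset.subset_union_right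
    exact (Finset.disjoint_self_iff_empty _).1 (hdisj.mono_right (hσρ ▸ Finset.subset_union_left))
  · rintro rfl
    exact ⟨hS _ hσ.1 _ (Finset.empty_subset _), Finset.disjoint_empty_left _,
      (Finset.empty_union σ).symm ▸ hσ.1⟩

@[simp]
lemma linkC_empty (S : Finset (Finset α)) : linkC S ∅ = S := by
  ext ρ
  simp

omit [DecidableEq α] in
lemma isComplex_powerset (σ : Finset α) : IsComplex σ.powerset :=
  fun _ hτ _ hρτ => Finset.mem_powerset.2 (hρτ.trans (Finset.mem_powerset.1 hτ))

omit [DecidableEq α] in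
lemma isFacet_powerset_self (σ : Finset α) : IsFacet σ.powerset σ :=
  ⟨Finset.mem_powerset_self σ, fun _ hτ hστ => hστ.antisymm (Finset.mem_powerset.1 hτ)⟩

omit [DecidableEq α] in
lemma eq_of_isFacet_powerset {σ τ : Finset α} (h : IsFacet σ.powerset τ) : τ = σ :=
  h.2 σ (Finset.mem_powerset_self σ) (Finset.mem_powerset.1 h.1)

lemma restrictC_powerset (σ T : Finset α) : restrictC σ.powerset T = (σ ∩ T).powerset := by
  ext ρ
  simp only [mem_restrictC, Finset.mem_powerset, Finset.subset_inter_iff]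

lemma linkC_powerset {σ τ : Finset α} (hτσ : τ ⊆ σ) :
    linkC σ.powerset τ = (σ \ τ).powerset := by
  ext ρ
  simp only [mem_linkC, Finset.mem_powerset, Finset.subset_sdiff, Finset.union_subset_iff]
  exact ⟨fun h => ⟨h.1, h.2.1⟩, fun h => ⟨h.1, h.2, h.1, hτσ⟩⟩

def greedyStep (S : Finset (Finset α)) (τ : Finset α) (a : α) : Finset α :=
  if insert a τ ∈ S then insert a τ else τ

lemma lexMinFacet_eq_foldl (w : List α) (S : Finset (Finset α)) :
    lexMinFacet w S = w.foldl (greedyStep S) ∅ := rfl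

section Greedy

variable {S : Finset (Finset α)}

lemma subset_foldl_greedyStep (w : List α) (τ : Finset α) : τ ⊆ w.foldl (greedyStep S) τ := by
  induction w generalizing τ with
  | nil => exact subset_rfl
  | cons a w ih =>
    refine subset_trans ?_ (ih _)
    unfold greedyStep
    split_ifs
    exacts [Finset.subset_insert a τ, subset_rfl]

lemma foldl_greedyStep_eq_or_mem (w : List α) (τ : Finset α) :
    w.foldl (greedyStep S) τ = τ ∨ w.foldl (greedyStep S) τ ∈ S := by
  induction w generalizing τ with
  | nil => exact Or.inl rfl
  | cons a w ih =>
    rw [List.foldl_cons]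
    unfold greedyStep
    split_ifs with ha
    · exact (ih _).elim (fun h => Or.inr (h ▸ ha)) Or.inr
    · exact ih τ

lemma mem_foldl_greedyStep (hS : IsComplex S) {ρ : Finset α} (hρ : ρ ∈ S) {w : List α}
    {τ : Finset α} (hsub : w.foldl (greedyStep S) τ ⊆ ρ) {a : α} (haw : a ∈ w) (haρ : a ∈ ρ) :
    a ∈ w.foldl (greedyStep S) τ := by
  induction w generalizing τ with
  | nil => simp at haw
  | cons b w ih =>
    rw [List.foldl_cons] at hsub ⊢
    rcases List.mem_cons.1 haw with rfl | haw
    · refine subset_foldl_greedyStep w _ ?_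
      have hτρ : τ ⊆ ρ := by
        unfold greedyStep at hsub
        split_ifs at hsub
        exacts [(Finset.subset_insert a τ).trans ((subset_foldl_greedyStep w _).trans hsub),
          (subset_foldl_greedyStep w _).trans hsub]
      rw [greedyStep, if_pos (hS ρ hρ _ (Finset.insert_subset haρ hτρ))]
      exact Finset.mem_insert_self a τ
    · exact ih hsub haw

lemma lexMinFacet_eq_empty_or_mem (w : List α) (S : Finset (Finset α)) :
    lexMinFacet w S = ∅ ∨ lexMinFacet w S ∈ S :=
  foldl_greedyStep_eq_or_mem w ∅

lemma lexMinFacet_subset {w : List α} {T : Finset α} (hT : ∀ σ ∈ S, σ ⊆ T) :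
    lexMinFacet w S ⊆ T :=
  (lexMinFacet_eq_empty_or_mem w S).elim (fun h => h ▸ Finset.empty_subset T) (hT _)

lemma isFacet_lexMinFacet (hS : IsComplex S) (hne : S.Nonempty) {w : List α}
    (hw : ∀ σ ∈ S, σ ⊆ w.toFinset) : IsFacet S (lexMinFacet w S) := by
  have hmem : lexMinFacet w S ∈ S :=
    (lexMinFacet_eq_empty_or_mem w S).elim (fun h => h ▸ hS.empty_mem hne) id
  refine ⟨hmem, fun ρ hρ hsub => hsub.antisymm fun a haρ => ?_⟩
  exact mem_foldl_greedyStep hS hρ hsub (List.mem_toFinset.1 (hw ρ hρ haρ)) haρ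

end Greedy

lemma lexMinFacet_powerset {w : List α} {σ : Finset α} (hσ : σ ⊆ w.toFinset) :
    lexMinFacet w σ.powerset = σ :=
  eq_of_isFacet_powerset <| isFacet_lexMinFacet (isComplex_powerset σ)
    ⟨σ, Finset.mem_powerset_self σ⟩ fun _ hτ => (Finset.mem_powerset.1 hτ).trans hσ

section Join

variable {I₁ I₂ : Finset α} {S₁ S₂ : Finset (Finset α)}

lemma union_inter_eq_left_of_disjoint (hI : Disjoint I₁ I₂) {σ₁ σ₂ : Finset α} (h₁ : σ₁ ⊆ I₁)
    (h₂ : σ₂ ⊆ I₂) : (σ₁ ∪ σ₂) ∩ I₁ = σ₁ := by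
  rw [Finset.union_inter_distrib_right, Finset.inter_eq_left.2 h₁,
    Finset.disjoint_iff_inter_eq_empty.1 (hI.symm.mono_left h₂), Finset.union_empty]

lemma union_inter_eq_right_of_disjoint (hI : Disjoint I₁ I₂) {σ₁ σ₂ : Finset α} (h₁ : σ₁ ⊆ I₁)
    (h₂ : σ₂ ⊆ I₂) : (σ₁ ∪ σ₂) ∩ I₂ = σ₂ := by
  rw [Finset.union_comm, union_inter_eq_left_of_disjoint hI.symm h₂ h₁]

lemma mem_joinC_iff (hI : Disjoint I₁ I₂) (h₁ : ∀ σ ∈ S₁, σ ⊆ I₁) (h₂ : ∀ σ ∈ S₂, σ ⊆ I₂)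
    {σ : Finset α} : σ ∈ joinC S₁ S₂ ↔ σ ⊆ I₁ ∪ I₂ ∧ σ ∩ I₁ ∈ S₁ ∧ σ ∩ I₂ ∈ S₂ := by
  rw [mem_joinC]
  constructor
  · rintro ⟨σ₁, hσ₁, σ₂, hσ₂, rfl⟩
    rw [union_inter_eq_left_of_disjoint hI (h₁ _ hσ₁) (h₂ _ hσ₂),
      union_inter_eq_right_of_disjoint hI (h₁ _ hσ₁) (h₂ _ hσ₂)]
    exact ⟨Finset.union_subset_union (h₁ _ hσ₁) (h₂ _ hσ₂), hσ₁, hσ₂⟩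
  · rintro ⟨hσ, hσ₁, hσ₂⟩
    exact ⟨_, hσ₁, _, hσ₂, by rw [← Finset.inter_union_distrib_left, Finset.inter_eq_left.2 hσ]⟩

lemma isComplex_joinC (hI : Disjoint I₁ I₂) (h₁ : ∀ σ ∈ S₁, σ ⊆ I₁) (h₂ : ∀ σ ∈ S₂, σ ⊆ I₂)
    (hS₁ : IsComplex S₁) (hS₂ : IsComplex S₂) : IsComplex (joinC S₁ S₂) := by
  intro σ hσ τ hτσ
  rw [mem_joinC_iff hI h₁ h₂] at hσ ⊢
  exact ⟨hτσ.trans hσ.1, hS₁ _ hσ.2.1 _ (Finset.inter_subset_inter_right hτσ),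
    hS₂ _ hσ.2.2 _ (Finset.inter_subset_inter_right hτσ)⟩

lemma restrictC_joinC (hI : Disjoint I₁ I₂) (h₁ : ∀ σ ∈ S₁, σ ⊆ I₁) (h₂ : ∀ σ ∈ S₂, σ ⊆ I₂)
    {T₁ T₂ : Finset α} (hT₁ : T₁ ⊆ I₁) (hT₂ : T₂ ⊆ I₂) :
    restrictC (joinC S₁ S₂) (T₁ ∪ T₂) = joinC (restrictC S₁ T₁) (restrictC S₂ T₂) := by
  have h₁' : ∀ σ ∈ restrictC S₁ T₁, σ ⊆ I₁ := fun σ hσ => h₁ σ (mem_restrictC.1 hσ).1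
  have h₂' : ∀ σ ∈ restrictC S₂ T₂, σ ⊆ I₂ := fun σ hσ => h₂ σ (mem_restrictC.1 hσ).1
  ext σ
  rw [mem_restrictC, mem_joinC_iff hI h₁ h₂, mem_joinC_iff hI h₁' h₂', mem_restrictC,
    mem_restrictC]
  simp only [Finset.disjoint_left, Finset.subset_iff, Finset.mem_union, Finset.mem_inter] at *
  grind

lemma linkC_joinC (hI : Disjoint I₁ I₂) (h₁ : ∀ σ ∈ S₁, σ ⊆ I₁) (h₂ : ∀ σ ∈ S₂, σ ⊆ I₂)
    {τ₁ τ₂ : Finset α} (hτ₁ : τ₁ ⊆ I₁) (hτ₂ : τ₂ ⊆ I₂) :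
    linkC (joinC S₁ S₂) (τ₁ ∪ τ₂) = joinC (linkC S₁ τ₁) (linkC S₂ τ₂) := by
  have h₁' : ∀ σ ∈ linkC S₁ τ₁, σ ⊆ I₁ := fun σ hσ => h₁ σ (mem_linkC.1 hσ).1
  have h₂' : ∀ σ ∈ linkC S₂ τ₂, σ ⊆ I₂ := fun σ hσ => h₂ σ (mem_linkC.1 hσ).1
  have e₁ (ρ : Finset α) : (ρ ∪ (τ₁ ∪ τ₂)) ∩ I₁ = ρ ∩ I₁ ∪ τ₁ := by
    ext a
    simp only [Finset.disjoint_left, Finset.subset_iff, Finset.mem_union, Finset.mem_inter] at *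
    grind
  have e₂ (ρ : Finset α) : (ρ ∪ (τ₁ ∪ τ₂)) ∩ I₂ = ρ ∩ I₂ ∪ τ₂ := by
    ext a
    simp only [Finset.disjoint_left, Finset.subset_iff, Finset.mem_union, Finset.mem_inter] at *
    grind
  ext ρ
  rw [mem_linkC, mem_joinC_iff hI h₁ h₂, mem_joinC_iff hI h₁ h₂, mem_joinC_iff hI h₁' h₂',
    mem_linkC, mem_linkC, e₁, e₂]
  simp only [Finset.disjoint_left, Finset.subset_iff, Finset.mem_union, Finset.mem_inter] at *
  grind

lemma IsFacet.inter_left_of_joinC (hI : Disjoint I₁ I₂) (h₁ : ∀ σ ∈ S₁, σ ⊆ I₁)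
    (h₂ : ∀ σ ∈ S₂, σ ⊆ I₂) {σ : Finset α} (hσ : IsFacet (joinC S₁ S₂) σ) :
    IsFacet S₁ (σ ∩ I₁) := by
  obtain ⟨hσI, hσ₁, hσ₂⟩ := (mem_joinC_iff hI h₁ h₂).1 hσ.1
  refine ⟨hσ₁, fun τ hτ hστ => ?_⟩
  have hσ_le : σ ⊆ τ ∪ σ ∩ I₂ := by
    simp only [Finset.subset_iff, Finset.mem_union, Finset.mem_inter] at *
    grind
  rw [hσ.2 _ (mem_joinC.2 ⟨τ, hτ, _, hσ₂, rfl⟩) hσ_le,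
    union_inter_eq_left_of_disjoint hI (h₁ τ hτ) Finset.inter_subset_right]

lemma joinC_comm (S₁ S₂ : Finset (Finset α)) : joinC S₁ S₂ = joinC S₂ S₁ := by
  ext σ
  simp only [mem_joinC]
  exact ⟨fun ⟨σ₁, h₁, σ₂, h₂, h⟩ => ⟨σ₂, h₂, σ₁, h₁, Finset.union_comm σ₁ σ₂ ▸ h⟩,
    fun ⟨σ₂, h₂, σ₁, h₁, h⟩ => ⟨σ₁, h₁, σ₂, h₂, Finset.union_comm σ₂ σ₁ ▸ h⟩⟩

lemma isPure_joinC (hI : Disjoint I₁ I₂) (h₁ : ∀ σ ∈ S₁, σ ⊆ I₁) (h₂ : ∀ σ ∈ S₂, σ ⊆ I₂)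
    (hp₁ : IsPure S₁) (hp₂ : IsPure S₂) : IsPure (joinC S₁ S₂) := by
  have card_eq {σ : Finset α} (hσ : IsFacet (joinC S₁ S₂) σ) :
      σ.card = (σ ∩ I₁).card + (σ ∩ I₂).card := by
    rw [← Finset.card_union_of_disjoint (hI.mono Finset.inter_subset_right
      Finset.inter_subset_right), ← Finset.inter_union_distrib_left,
      Finset.inter_eq_left.2 ((mem_joinC_iff hI h₁ h₂).1 hσ.1).1]
  have facet_right {σ : Finset α} (hσ : IsFacet (joinC S₁ S₂) σ) : IsFacet S₂ (σ ∩ I₂) :=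
    IsFacet.inter_left_of_joinC hI.symm h₂ h₁ (joinC_comm S₁ S₂ ▸ hσ)
  intro σ τ hσ hτ
  rw [card_eq hσ, card_eq hτ, hp₁ _ _ (hσ.inter_left_of_joinC hI h₁ h₂)
    (hτ.inter_left_of_joinC hI h₁ h₂), hp₂ _ _ (facet_right hσ) (facet_right hτ)]

lemma greedyStep_mem {S : Finset (Finset α)} {τ : Finset α} (hτ : τ ∈ S) (a : α) :
    greedyStep S τ a ∈ S := by
  unfold greedyStep
  split_ifs with h
  exacts [h, hτ]

lemma greedyStep_joinC_of_mem_left (hI : Disjoint I₁ I₂) (h₁ : ∀ σ ∈ S₁, σ ⊆ I₁)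
    (h₂ : ∀ σ ∈ S₂, σ ⊆ I₂) {τ₁ τ₂ : Finset α} (hτ₁ : τ₁ ∈ S₁) (hτ₂ : τ₂ ∈ S₂) {a : α}
    (ha : a ∈ I₁) : greedyStep (joinC S₁ S₂) (τ₁ ∪ τ₂) a = greedyStep S₁ τ₁ a ∪ τ₂ := by
  have hins : insert a τ₁ ⊆ I₁ := Finset.insert_subset ha (h₁ τ₁ hτ₁)
  have key : insert a (τ₁ ∪ τ₂) ∈ joinC S₁ S₂ ↔ insert a τ₁ ∈ S₁ := by
    rw [← Finset.insert_union, mem_joinC_iff hI h₁ h₂,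
      union_inter_eq_left_of_disjoint hI hins (h₂ τ₂ hτ₂),
      union_inter_eq_right_of_disjoint hI hins (h₂ τ₂ hτ₂)]
    exact ⟨fun h => h.2.1, fun h => ⟨Finset.union_subset_union hins (h₂ τ₂ hτ₂), h, hτ₂⟩⟩
  unfold greedyStep
  by_cases h : insert a τ₁ ∈ S₁
  · rw [if_pos (key.2 h), if_pos h, Finset.insert_union]
  · rw [if_neg (mt key.1 h), if_neg h]

lemma greedyStep_joinC_of_mem_right (hI : Disjoint I₁ I₂) (h₁ : ∀ σ ∈ S₁, σ ⊆ I₁)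
    (h₂ : ∀ σ ∈ S₂, σ ⊆ I₂) {τ₁ τ₂ : Finset α} (hτ₁ : τ₁ ∈ S₁) (hτ₂ : τ₂ ∈ S₂) {a : α}
    (ha : a ∈ I₂) : greedyStep (joinC S₁ S₂) (τ₁ ∪ τ₂) a = τ₁ ∪ greedyStep S₂ τ₂ a := by
  rw [joinC_comm, Finset.union_comm, Finset.union_comm τ₁,
    greedyStep_joinC_of_mem_left hI.symm h₂ h₁ hτ₂ hτ₁ ha]

lemma greedyStep_joinC_of_notMem (h₁ : ∀ σ ∈ S₁, σ ⊆ I₁) (h₂ : ∀ σ ∈ S₂, σ ⊆ I₂)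
    (τ : Finset α) {a : α} (ha₁ : a ∉ I₁) (ha₂ : a ∉ I₂) :
    greedyStep (joinC S₁ S₂) τ a = τ := by
  refine if_neg fun h => ?_
  obtain ⟨σ₁, hσ₁, σ₂, hσ₂, hσ⟩ := mem_joinC.1 h
  have ha : a ∈ σ₁ ∪ σ₂ := hσ ▸ Finset.mem_insert_self a τ
  rcases Finset.mem_union.1 ha with ha | ha
  exacts [ha₁ (h₁ σ₁ hσ₁ ha), ha₂ (h₂ σ₂ hσ₂ ha)]

lemma foldl_greedyStep_joinC (hI : Disjoint I₁ I₂) (h₁ : ∀ σ ∈ S₁, σ ⊆ I₁)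
    (h₂ : ∀ σ ∈ S₂, σ ⊆ I₂) (w : List α) {τ₁ τ₂ : Finset α} (hτ₁ : τ₁ ∈ S₁) (hτ₂ : τ₂ ∈ S₂) :
    w.foldl (greedyStep (joinC S₁ S₂)) (τ₁ ∪ τ₂) =
      (w.filter fun a => decide (a ∈ I₁)).foldl (greedyStep S₁) τ₁ ∪
        (w.filter fun a => decide (a ∈ I₂)).foldl (greedyStep S₂) τ₂ := by
  induction w generalizing τ₁ τ₂ with
  | nil => rfl
  | cons a w ih =>
    by_cases ha₁ : a ∈ I₁
    · have ha₂ : a ∉ I₂ := Finset.disjoint_left.1 hI ha₁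
      simp only [List.filter_cons, ha₁, ha₂, decide_true, decide_false, if_true,
        Bool.false_eq_true, if_false, List.foldl_cons]
      rw [greedyStep_joinC_of_mem_left hI h₁ h₂ hτ₁ hτ₂ ha₁,
        ih (greedyStep_mem hτ₁ a) hτ₂]
    by_cases ha₂ : a ∈ I₂
    · simp only [List.filter_cons, ha₁, ha₂, decide_true, decide_false, if_true,
        Bool.false_eq_true, if_false, List.foldl_cons]
      rw [greedyStep_joinC_of_mem_right hI h₁ h₂ hτ₁ hτ₂ ha₂,
        ih hτ₁ (greedyStep_mem hτ₂ a)]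
    · simp only [List.filter_cons, ha₁, ha₂, decide_false, Bool.false_eq_true, if_false,
        List.foldl_cons]
      rw [greedyStep_joinC_of_notMem h₁ h₂ _ ha₁ ha₂, ih hτ₁ hτ₂]

lemma lexMinFacet_joinC (hI : Disjoint I₁ I₂) (h₁ : ∀ σ ∈ S₁, σ ⊆ I₁)
    (h₂ : ∀ σ ∈ S₂, σ ⊆ I₂) (he₁ : ∅ ∈ S₁) (he₂ : ∅ ∈ S₂) (w : List α) :
    lexMinFacet w (joinC S₁ S₂) =
      lexMinFacet (w.filter fun a => decide (a ∈ I₁)) S₁ ∪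
        lexMinFacet (w.filter fun a => decide (a ∈ I₂)) S₂ := by
  rw [lexMinFacet_eq_foldl, ← Finset.empty_union ∅, foldl_greedyStep_joinC hI h₁ h₂ w he₁ he₂]
  rfl

lemma contractC_joinC (hI : Disjoint I₁ I₂) (h₁ : ∀ σ ∈ S₁, σ ⊆ I₁) (h₂ : ∀ σ ∈ S₂, σ ⊆ I₂)
    (he₁ : ∅ ∈ S₁) (he₂ : ∅ ∈ S₂)
    {w₁ w₂ w : List α} (hw₁ : w.filter (fun a => decide (a ∈ I₁)) = w₁)
    (hw₂ : w.filter (fun a => decide (a ∈ I₂)) = w₂) {T₁ T₂ : Finset α} (hT₁ : T₁ ⊆ I₁)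
    (hT₂ : T₂ ⊆ I₂) :
    contractC w (joinC S₁ S₂) (T₁ ∪ T₂) = joinC (contractC w₁ S₁ T₁) (contractC w₂ S₂ T₂) := by
  have h₁' : ∀ σ ∈ restrictC S₁ T₁, σ ⊆ I₁ := fun σ hσ => h₁ σ (mem_restrictC.1 hσ).1
  have h₂' : ∀ σ ∈ restrictC S₂ T₂, σ ⊆ I₂ := fun σ hσ => h₂ σ (mem_restrictC.1 hσ).1
  rw [contractC, restrictC_joinC hI h₁ h₂ hT₁ hT₂,
    lexMinFacet_joinC hI h₁' h₂' (mem_restrictC.2 ⟨he₁, Finset.empty_subset T₁⟩)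
      (mem_restrictC.2 ⟨he₂, Finset.empty_subset T₂⟩), hw₁, hw₂,
    linkC_joinC hI h₁ h₂ (lexMinFacet_subset h₁') (lexMinFacet_subset h₂')]
  rfl

end Join

lemma toFinset_subset_of_sublist {l₁ l₂ : List α} (h : l₁.Sublist l₂) :
    l₁.toFinset ⊆ l₂.toFinset :=
  fun _ ha => List.mem_toFinset.2 (h.subset (List.mem_toFinset.1 ha))

omit [DecidableEq α] in
lemma exists_filter_take_eq_take_filter (l : List α) (p : α → Bool) (k : ℕ) :
    ∃ m, (l.take k).filter p = (l.filter p).take m ∧ (l.drop k).filter p = (l.filter p).drop m := by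
  have hsplit : l.filter p = (l.take k).filter p ++ (l.drop k).filter p := by
    rw [← List.filter_append, List.take_append_drop]
  exact ⟨((l.take k).filter p).length, by rw [hsplit, List.take_left],
    by rw [hsplit, List.drop_left]⟩

lemma isShuffle_filter {v w₁ w₂ : List α} (hv : v.Nodup)
    (hvw : v.toFinset ⊆ w₁.toFinset ∪ w₂.toFinset) :
    IsShuffle (v.filter fun a => decide (a ∈ w₁.toFinset))
      (v.filter fun a => decide (a ∈ w₂.toFinset)) v := by
  have filter_mem_filter (w : List α) :
      (v.filter fun a => decide (a ∈ (v.filter fun a => decide (a ∈ w.toFinset)).toFinset)) =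
        v.filter fun a => decide (a ∈ w.toFinset) :=
    List.filter_congr fun a ha => by simp [ha]
  refine ⟨hv, ?_, filter_mem_filter w₁, filter_mem_filter w₂⟩
  ext a
  have ha := @hvw a
  simp only [List.mem_toFinset, Finset.mem_union, List.mem_filter, decide_eq_true_eq] at ha ⊢
  tauto

lemma IsShuffle.exists_take_drop {w₁ w₂ w : List α} (hsh : IsShuffle w₁ w₂ w) (k : ℕ) :
    ∃ k₁ k₂, IsShuffle (w₁.take k₁) (w₂.take k₂) (w.take k) ∧
      IsShuffle (w₁.drop k₁) (w₂.drop k₂) (w.drop k) := by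
  obtain ⟨hnd, hw, hw₁, hw₂⟩ := hsh
  obtain ⟨k₁, htake₁, hdrop₁⟩ := exists_filter_take_eq_take_filter w (· ∈ w₁.toFinset) k
  obtain ⟨k₂, htake₂, hdrop₂⟩ := exists_filter_take_eq_take_filter w (· ∈ w₂.toFinset) k
  rw [hw₁] at htake₁ hdrop₁
  rw [hw₂] at htake₂ hdrop₂
  refine ⟨k₁, k₂, ?_, ?_⟩
  · have := isShuffle_filter ((List.take_sublist k w).nodup hnd)
      (hw ▸ toFinset_subset_of_sublist (List.take_sublist k w))
    rwa [htake₁, htake₂] at this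
  · have := isShuffle_filter ((List.drop_sublist k w).nodup hnd)
      (hw ▸ toFinset_subset_of_sublist (List.drop_sublist k w))
    rwa [hdrop₁, hdrop₂] at this

namespace IsOrderedComplex

variable {w : List α} {S : Finset (Finset α)}

lemma restrictC_take (h : IsOrderedComplex w S) (k : ℕ) :
    IsOrderedComplex (w.take k) (restrictC S (w.take k).toFinset) :=
  ⟨(List.take_sublist k w).nodup h.1, fun _ hσ => (mem_restrictC.1 hσ).2, h.2.2.restrictC _⟩

lemma restrictC_toFinset (h : IsOrderedComplex w S) : restrictC S w.toFinset = S :=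
  Finset.filter_true_of_mem h.2.1

lemma isFacet_lexMinFacet_restrictC (h : IsOrderedComplex w S) (hne : S.Nonempty)
    (A : Finset α) : IsFacet (restrictC S A) (lexMinFacet w (restrictC S A)) :=
  isFacet_lexMinFacet (h.2.2.restrictC A)
    ⟨∅, mem_restrictC.2 ⟨h.2.2.empty_mem hne, Finset.empty_subset A⟩⟩
    fun σ hσ => h.2.1 σ (mem_restrictC.1 hσ).1

lemma disjoint_of_mem_contractC (h : IsOrderedComplex w S) {A ρ : Finset α}
    (hρ : ρ ∈ contractC w S A) : Disjoint ρ A := by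
  obtain ⟨-, hdisj, hρτ⟩ := mem_linkC.1 hρ
  have hne : S.Nonempty := ⟨_, hρτ⟩
  set τ := lexMinFacet w (restrictC S A)
  have hτ : IsFacet (restrictC S A) τ := h.isFacet_lexMinFacet_restrictC hne A
  refine Finset.disjoint_left.2 fun a haρ haA => Finset.disjoint_left.1 hdisj haρ ?_
  have hins : insert a τ ∈ restrictC S A :=
    mem_restrictC.2 ⟨h.2.2 _ hρτ _ (Finset.insert_subset (Finset.mem_union_left τ haρ)
      Finset.subset_union_right), Finset.insert_subset haA (mem_restrictC.1 hτ.1).2⟩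
  exact (hτ.2 _ hins (Finset.subset_insert a τ)).symm ▸ Finset.mem_insert_self a τ

lemma contractC_take (h : IsOrderedComplex w S) (k : ℕ) :
    IsOrderedComplex (w.drop k) (contractC w S (w.take k).toFinset) := by
  refine ⟨(List.drop_sublist k w).nodup h.1, fun ρ hρ a haρ => ?_, h.2.2.linkC _⟩
  have haw : a ∈ w.take k ++ w.drop k :=
    (List.take_append_drop k w).symm ▸ List.mem_toFinset.1 (h.2.1 ρ (mem_linkC.1 hρ).1 haρ)
  rcases List.mem_append.1 haw with hak | hak
  · exact absurd (List.mem_toFinset.2 hak)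
      (Finset.disjoint_left.1 (h.disjoint_of_mem_contractC hρ) haρ)
  · exact List.mem_toFinset.2 hak

end IsOrderedComplex

lemma IsShuffle.isOrderedComplex_joinC {w₁ w₂ w : List α} {S₁ S₂ : Finset (Finset α)}
    (hsh : IsShuffle w₁ w₂ w) (hI : Disjoint w₁.toFinset w₂.toFinset)
    (h₁ : IsOrderedComplex w₁ S₁) (h₂ : IsOrderedComplex w₂ S₂) :
    IsOrderedComplex w (joinC S₁ S₂) := by
  refine ⟨hsh.1, fun σ hσ => ?_, isComplex_joinC hI h₁.2.1 h₂.2.1 h₁.2.2 h₂.2.2⟩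
  exact hsh.2.1 ▸ ((mem_joinC_iff hI h₁.2.1 h₂.2.1).1 hσ).1

namespace OrderDecomposable

variable {w : List α} {S : Finset (Finset α)}

lemma isPure (h : OrderDecomposable w S) : IsPure S := by
  cases h with
  | unique _ _ σ _ huniq => exact fun τ ρ hτ hρ => by rw [huniq τ hτ, huniq ρ hρ]
  | pure _ _ hpure => exact hpure

lemma powerset (w : List α) (σ : Finset α) : OrderDecomposable w σ.powerset :=
  unique w _ σ (isFacet_powerset_self σ) fun _ => eq_of_isFacet_powerset

lemma empty (w : List α) : OrderDecomposable w (∅ : Finset (Finset α)) := by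
  induction hn : w.length using Nat.strong_induction_on generalizing w with
  | _ n ih =>
  have isPure_empty : IsPure (∅ : Finset (Finset α)) := fun _ _ hσ => absurd hσ.1 (by simp)
  refine pure w ∅ isPure_empty (fun _ _ _ => isPure_empty) (fun _ _ _ => isPure_empty)
    (fun k _ hkw => ?_) (fun k hk hkw => ?_)
  · exact ih _ (by rw [← hn, List.length_take]; omega) _ rfl
  · exact ih _ (by rw [← hn, List.length_drop]; omega) _ rfl

lemma restrictC_empty (w : List α) (S : Finset (Finset α)) :
    OrderDecomposable w (restrictC S ∅) := by
  by_cases he : ∅ ∈ S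
  · convert powerset w ∅
    ext σ
    simp only [mem_restrictC, Finset.subset_empty, Finset.powerset_empty, Finset.mem_singleton]
    exact ⟨And.right, fun hσ => ⟨hσ ▸ he, hσ⟩⟩
  · convert empty w
    ext σ
    simp only [mem_restrictC, Finset.subset_empty, Finset.notMem_empty, iff_false]
    rintro ⟨hσ, rfl⟩
    exact he hσ

lemma restrictC_take (hS : IsOrderedComplex w S) (h : OrderDecomposable w S) (k : ℕ) :
    OrderDecomposable (w.take k) (restrictC S (w.take k).toFinset) := by
  cases h with
  | unique _ _ σ hσ huniq =>
    rw [hS.2.2.eq_powerset_of_isFacet_unique hσ huniq, restrictC_powerset]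
    exact powerset _ _
  | pure _ _ hpure hres_pure hcon_pure hres hcon =>
    rcases Nat.eq_zero_or_pos k with rfl | hk
    · simpa using restrictC_empty [] S
    rcases Nat.lt_or_ge k w.length with hkw | hkw
    · exact hres k hk hkw
    · rw [List.take_of_length_le hkw, hS.restrictC_toFinset]
      exact pure w S hpure hres_pure hcon_pure hres hcon

lemma contractC_take (hS : IsOrderedComplex w S) (h : OrderDecomposable w S) (k : ℕ) :
    OrderDecomposable (w.drop k) (contractC w S (w.take k).toFinset) := by
  cases h with
  | unique _ _ σ hσ huniq =>
    have hσw : σ ∩ (w.take k).toFinset ⊆ w.toFinset :=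
      Finset.inter_subset_left.trans (hS.2.1 σ hσ.1)
    rw [contractC, hS.2.2.eq_powerset_of_isFacet_unique hσ huniq, restrictC_powerset,
      lexMinFacet_powerset hσw, linkC_powerset Finset.inter_subset_left]
    exact powerset _ _
  | pure _ _ hpure hres_pure hcon_pure hres hcon =>
    rcases Nat.eq_zero_or_pos k with rfl | hk
    · have hτ : lexMinFacet w (restrictC S ∅) = ∅ :=
        Finset.subset_empty.1 (lexMinFacet_subset fun σ hσ => (mem_restrictC.1 hσ).2)
      rw [List.drop_zero, List.take_zero, List.toFinset_nil, contractC, hτ, linkC_empty]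
      exact pure w S hpure hres_pure hcon_pure hres hcon
    rcases Nat.lt_or_ge k w.length with hkw | hkw
    · exact hcon k hk hkw
    rcases S.eq_empty_or_nonempty with rfl | hne
    · exact empty _
    rw [List.take_of_length_le hkw, contractC, hS.restrictC_toFinset,
      (isFacet_lexMinFacet hS.2.2 hne hS.2.1).linkC_eq_singleton_empty hS.2.2,
      ← Finset.powerset_empty]
    exact powerset _ _

end OrderDecomposable

lemma IsShuffle.orderDecomposable_joinC {w₁ w₂ w : List α} {S₁ S₂ : Finset (Finset α)}
    (hsh : IsShuffle w₁ w₂ w) (hI : Disjoint w₁.toFinset w₂.toFinset)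
    (hS₁ : IsOrderedComplex w₁ S₁) (hS₂ : IsOrderedComplex w₂ S₂)
    (h₁ : OrderDecomposable w₁ S₁) (h₂ : OrderDecomposable w₂ S₂) :
    OrderDecomposable w (joinC S₁ S₂) := by
  induction hn : w.length using Nat.strong_induction_on generalizing w₁ w₂ w S₁ S₂ with
  | _ n ih =>
  rcases S₁.eq_empty_or_nonempty with rfl | hne₁
  · simpa [joinC] using OrderDecomposable.empty w
  rcases S₂.eq_empty_or_nonempty with rfl | hne₂
  · simpa [joinC] using OrderDecomposable.empty w
  have segments (k : ℕ) (hk : 0 < k) (hkw : k < w.length) :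
      OrderDecomposable (w.take k) (restrictC (joinC S₁ S₂) (w.take k).toFinset) ∧
        OrderDecomposable (w.drop k) (contractC w (joinC S₁ S₂) (w.take k).toFinset) := by
    obtain ⟨k₁, k₂, hshT, hshD⟩ := hsh.exists_take_drop k
    have hT₁ := toFinset_subset_of_sublist (List.take_sublist k₁ w₁)
    have hT₂ := toFinset_subset_of_sublist (List.take_sublist k₂ w₂)
    rw [hshT.2.1, restrictC_joinC hI hS₁.2.1 hS₂.2.1 hT₁ hT₂,
      contractC_joinC hI hS₁.2.1 hS₂.2.1 (hS₁.2.2.empty_mem hne₁) (hS₂.2.2.empty_mem hne₂)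
        hsh.2.2.1 hsh.2.2.2 hT₁ hT₂]
    have hD₁ := toFinset_subset_of_sublist (List.drop_sublist k₁ w₁)
    have hD₂ := toFinset_subset_of_sublist (List.drop_sublist k₂ w₂)
    exact ⟨ih _ (by rw [← hn, List.length_take]; omega) hshT (hI.mono hT₁ hT₂)
        (hS₁.restrictC_take k₁) (hS₂.restrictC_take k₂) (h₁.restrictC_take hS₁ k₁)
        (h₂.restrictC_take hS₂ k₂) rfl,
      ih _ (by rw [← hn, List.length_drop]; omega) hshD (hI.mono hD₁ hD₂)
        (hS₁.contractC_take k₁) (hS₂.contractC_take k₂) (h₁.contractC_take hS₁ k₁)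
        (h₂.contractC_take hS₂ k₂) rfl⟩
  exact OrderDecomposable.pure w _ (isPure_joinC hI hS₁.2.1 hS₂.2.1 h₁.isPure h₂.isPure)
    (fun k hk hkw => (segments k hk hkw).1.isPure) (fun k hk hkw => (segments k hk hkw).2.isPure)
    (fun k hk hkw => (segments k hk hkw).1) (fun k hk hkw => (segments k hk hkw).2)

/-- The class `𝒰` of all order-decomposable ordered complexes is a Hopf class. -/
theorem isHopfClass_orderDecomposable :
    IsHopfClass {p : List α × Finset (Finset α) |
      IsOrderedComplex p.1 p.2 ∧ OrderDecomposable p.1 p.2} := by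
  refine ⟨?_, ?_, ?_, ?_⟩
  · rintro ⟨w, S⟩ ⟨hS, h⟩
    exact ⟨hS, h.isPure⟩
  · rintro ⟨w₁, S₁⟩ ⟨hS₁, h₁⟩ ⟨w₂, S₂⟩ ⟨hS₂, h₂⟩ hI w hsh
    exact ⟨hsh.isOrderedComplex_joinC hI hS₁ hS₂, hsh.orderDecomposable_joinC hI hS₁ hS₂ h₁ h₂⟩
  · rintro ⟨w, S⟩ ⟨hS, h⟩ k
    exact ⟨(h.restrictC_take hS k).isPure, hS.restrictC_take k, h.restrictC_take hS k⟩
  · rintro ⟨w, S⟩ ⟨hS, h⟩ k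
    exact ⟨hS.contractC_take k, h.contractC_take hS k⟩

end OrderedComplexes
end

section
/- Every Hopf class is contained in the class 𝒰 of order-decomposable ordered complexes; that is, if 𝒬 is a Hopf class and (w,Σ) ∈ 𝒬, then (w,Σ) is order-decomposable. -/
namespace OrderedComplexes

variable {α : Type*} [DecidableEq α]

theorem orderDecomposable_of_isPure_of_closed {Q : Set (List α × Finset (Finset α))}
    (hpure : ∀ p ∈ Q, IsPure p.2)
    (hres : ∀ p ∈ Q, ∀ k : ℕ, (p.1.take k, restrictC p.2 (p.1.take k).toFinset) ∈ Q)
    (hcon : ∀ p ∈ Q, ∀ k : ℕ, (p.1.drop k, contractC p.1 p.2 (p.1.take k).toFinset) ∈ Q)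
    {p : List α × Finset (Finset α)} (hp : p ∈ Q) : OrderDecomposable p.1 p.2 := by
  induction hn : p.1.length using Nat.strong_induction_on generalizing p with
  | _ n ih =>
    refine .pure _ _ (hpure p hp)
      (fun k _ _ => hpure _ (hres p hp k)) (fun k _ _ => hpure _ (hcon p hp k))
      (fun k _ hk => ih _ ?_ (hres p hp k) rfl) (fun k hk₀ _ => ih _ ?_ (hcon p hp k) rfl)
    · rw [List.length_take]
      omega
    · rw [List.length_drop]
      omega

/-- Every Hopf class is contained in the class `𝒰` of order-decomposable ordered
complexes: if `𝒬` is a Hopf class and `(w, Σ) ∈ 𝒬`, then `(w, Σ)` is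
order-decomposable. -/
theorem hopfClass_subset_orderDecomposable (Q : Set (List α × Finset (Finset α)))
    (hQ : IsHopfClass Q) :
    ∀ p ∈ Q, OrderDecomposable p.1 p.2 := by
  obtain ⟨hpure, -, hres, hcon⟩ := hQ
  exact fun p hp => orderDecomposable_of_isPure_of_closed (fun p hp => (hpure p hp).2)
    (fun p hp k => (hres p hp k).2) hcon hp

end OrderedComplexes
end
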